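/- arXiv:1006.0091 — 8 statements merged into one kernel-verified Lean document; each statement's English description precedes it below -/
import Mathlib

section
/- Let Φ : [0,∞) → [0,∞) be an Orlicz function with Φ(t) > 0 for t > 0, and for t > 0 let Φ'₊(t) denote the right derivative of Φ at t (which exists since Φ is convex). Then, as elements of (0,∞], the infimum over t > 0 of t·Φ'₊(t)/Φ(t) equals the supremum of the set {p > 0 : the map t ↦ t^{−p}·Φ(t) is nondecreasing on (0,∞)} (this set always contains p = 1, and the common value is the lower Orlicz index a_Φ). -/
/-! Writing `g p t = t ^ (-p) * Φ t`, the right derivative of `g p` at `t > 0` is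
`t ^ (-p - 1) * (t * Φ'₊ t - p * Φ t)`, so `g p` is nondecreasing exactly when
`p ≤ t * Φ'₊ t / Φ t` for all `t > 0`. The two sides of the index identity are therefore the
infimum of this ratio and the supremum of its positive lower bounds. Convexity and `Φ 0 = 0`
give `Φ t ≤ t * Φ'₊ t`, i.e. `p = 1` is admissible. -/

open Set Filter

/-- An Orlicz function: continuous, convex, nondecreasing on `[0,∞)`, vanishing at `0`,
positive on `(0,∞)`, and tending to `∞` at `∞`. -/
def IsOrliczFunction (Φ : ℝ → ℝ) : Prop :=
  ContinuousOn Φ (Ici 0) ∧ ConvexOn ℝ (Ici 0) Φ ∧ MonotoneOn Φ (Ici 0) ∧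
    Φ 0 = 0 ∧ (∀ t > 0, 0 < Φ t) ∧ Tendsto Φ atTop atTop

/-- The right derivative of `Φ` at `t` (which exists for convex `Φ` at every `t > 0`). -/
noncomputable def rightDeriv (Φ : ℝ → ℝ) (t : ℝ) : ℝ :=
  derivWithin Φ (Ioi t) t

theorem monotoneOn_of_hasDerivWithinAt_Ioi_nonneg {f f' : ℝ → ℝ} {s : Set ℝ}
    (hs : s.OrdConnected) (hf : ContinuousOn f s)
    (hf' : ∀ x ∈ s, HasDerivWithinAt f (f' x) (Ioi x) x) (hf'_nonneg : ∀ x ∈ s, 0 ≤ f' x) :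
    MonotoneOn f s := by
  intro a ha b hb hab
  have hIcc : Icc a b ⊆ s := hs.out ha hb
  have hIco : Ico a b ⊆ s := Ico_subset_Icc_self.trans hIcc
  refine image_le_of_deriv_right_le_deriv_boundary (f := fun _ ↦ f a) (f' := 0)
    continuousOn_const (fun x _ ↦ hasDerivWithinAt_const x _ _) le_rfl (hf.mono hIcc)
    (fun x hx ↦ (hf' x (hIco hx)).Ici_of_Ioi) (fun x hx ↦ hf'_nonneg x (hIco hx))
    (right_mem_Icc.2 hab)

theorem HasDerivWithinAt.rpow_neg_mul {f : ℝ → ℝ} {f' p t : ℝ} {s : Set ℝ}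
    (hf : HasDerivWithinAt f f' s t) (ht : 0 < t) :
    HasDerivWithinAt (fun x ↦ x ^ (-p) * f x) (t ^ (-p - 1) * (t * f' - p * f t)) s t := by
  refine (((Real.hasDerivAt_rpow_const (Or.inl ht.ne')).hasDerivWithinAt).mul hf).congr_deriv ?_
  rw [Real.rpow_sub_one ht.ne']
  field_simp
  ring

theorem ConvexOn.hasDerivWithinAt_rightDeriv {Φ : ℝ → ℝ} (hΦ : ConvexOn ℝ (Ioi 0) Φ) {t : ℝ}
    (ht : 0 < t) : HasDerivWithinAt Φ (rightDeriv Φ t) (Ioi t) t :=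
  hΦ.hasDerivWithinAt_rightDeriv_of_mem_interior (by rwa [interior_Ioi])

theorem ConvexOn.monotoneOn_rpow_neg_mul_iff {Φ : ℝ → ℝ} (hΦ : ConvexOn ℝ (Ioi 0) Φ) (p : ℝ) :
    MonotoneOn (fun t ↦ t ^ (-p) * Φ t) (Ioi 0) ↔ ∀ t > 0, p * Φ t ≤ t * rightDeriv Φ t := by
  have hderiv (t : ℝ) (ht : 0 < t) := (hΦ.hasDerivWithinAt_rightDeriv ht).rpow_neg_mul (p := p) ht
  constructor
  · intro hmono t ht
    have hacc : AccPt t (𝓟 (Ioi t)) := by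
      simpa [accPt_principal_iff_nhdsWithin] using nhdsGT_neBot t
    have hnonneg := (hderiv t ht).nonneg_of_monotoneOn hacc (hmono.mono (Ioi_subset_Ioi ht.le))
    have := nonneg_of_mul_nonneg_right hnonneg (Real.rpow_pos_of_pos ht _)
    linarith
  · intro h
    refine monotoneOn_of_hasDerivWithinAt_Ioi_nonneg ordConnected_Ioi ?_ hderiv
      fun t ht ↦ mul_nonneg (Real.rpow_pos_of_pos ht _).le (sub_nonneg.2 (h t ht))
    exact (continuousOn_id.rpow_const fun t ht ↦ Or.inl ht.ne').mul
      (hΦ.continuousOn isOpen_Ioi)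

theorem ConvexOn.le_mul_rightDeriv {Φ : ℝ → ℝ} (hΦ : ConvexOn ℝ (Ici 0) Φ) (h0 : Φ 0 = 0)
    {t : ℝ} (ht : 0 < t) : Φ t ≤ t * rightDeriv Φ t := by
  have hint : t ∈ interior (Ici (0 : ℝ)) := by rwa [interior_Ici]
  have := (hΦ.slope_le_leftDeriv_of_mem_interior self_mem_Ici hint ht).trans
    (hΦ.leftDeriv_le_rightDeriv_of_mem_interior hint)
  rw [slope_def_field, h0, sub_zero, sub_zero, div_le_iff₀ ht] at this
  rwa [mul_comm]

theorem ENNReal.iInf_ofReal_eq_sSup_ofReal {ι : Sort*} (r : ι → ℝ) :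
    ⨅ i, ENNReal.ofReal (r i) = sSup (ENNReal.ofReal '' {p | 0 < p ∧ ∀ i, p ≤ r i}) := by
  apply le_antisymm
  · refine ENNReal.le_of_forall_nnreal_lt fun x hx ↦ ?_
    rcases eq_or_ne x 0 with rfl | hx0
    · simp
    have hlt (i : ι) : (x : ℝ) < r i := by
      have := hx.trans_le (iInf_le _ i)
      rw [← ENNReal.ofReal_coe_nnreal] at this
      exact (ENNReal.ofReal_lt_ofReal_iff'.1 this).1
    exact le_sSup ⟨x, ⟨NNReal.coe_pos.2 (pos_iff_ne_zero.2 hx0), fun i ↦ (hlt i).le⟩,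
      ENNReal.ofReal_coe_nnreal⟩
  · refine sSup_le ?_
    rintro _ ⟨p, ⟨-, hp⟩, rfl⟩
    exact le_iInf fun i ↦ ENNReal.ofReal_le_ofReal (hp i)

/-- The lower Orlicz index: `inf_{t>0} t Φ'₊(t)/Φ(t)` equals
`sup {p > 0 : t ↦ t^{-p} Φ(t) is nondecreasing on (0,∞)}`, as elements of `(0,∞]`;
moreover the set of such `p` contains `p = 1`. -/
theorem orlicz_lower_index_eq (Φ : ℝ → ℝ) (hΦ : IsOrliczFunction Φ) :
    MonotoneOn (fun t : ℝ => t ^ (-(1 : ℝ)) * Φ t) (Ioi 0) ∧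
    (⨅ t : Ioi (0 : ℝ), ENNReal.ofReal ((t : ℝ) * rightDeriv Φ t / Φ t)) =
      sSup (ENNReal.ofReal ''
        {p : ℝ | 0 < p ∧ MonotoneOn (fun t : ℝ => t ^ (-p) * Φ t) (Ioi 0)}) := by
  obtain ⟨-, hconv, -, h0, hpos, -⟩ := hΦ
  have hmono_iff := (hconv.subset Ioi_subset_Ici_self (convex_Ioi 0)).monotoneOn_rpow_neg_mul_iff
  refine ⟨(hmono_iff 1).2 fun t ht ↦ by simpa using hconv.le_mul_rightDeriv h0 ht, ?_⟩
  rw [ENNReal.iInf_ofReal_eq_sSup_ofReal]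
  congr 2
  ext p
  refine and_congr_right fun _ ↦ ?_
  rw [hmono_iff, Subtype.forall]
  exact forall₂_congr fun t ht ↦ le_div_iff₀ (hpos t ht)
end

section
/- Let Φ : [0,∞) → [0,∞) be an Orlicz function with Φ(t) > 0 for t > 0, and for t > 0 let Φ'₊(t) denote the right derivative of Φ at t (which exists since Φ is convex). Then, as elements of (0,∞] (with the convention that the infimum of the empty set is +∞), the supremum over t > 0 of t·Φ'₊(t)/Φ(t) equals the infimum of the set {q > 0 : the map t ↦ t^{−q}·Φ(t) is nonincreasing on (0,∞)} (the common value is the upper Orlicz index b_Φ). -/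
/-!
The map `t ↦ t^{-q} Φ(t)` has right derivative `t^{-q-1} (t Φ'₊(t) - q Φ(t))`, so it is
nonincreasing on `(0,∞)` exactly when `t Φ'₊(t) / Φ(t) ≤ q` for every `t > 0`. The admissible
exponents are therefore the positive upper bounds of `t ↦ t Φ'₊(t) / Φ(t)`, and in `[0,∞]` the
infimum of the positive upper bounds of a real family is the supremum of the family.
-/

open Set Filter

open Topology

theorem ENNReal.iSup_ofReal_eq_sInf_ofReal_pos_bounds {ι : Sort*} (f : ι → ℝ) :
    ⨆ i, ENNReal.ofReal (f i) = sInf (ENNReal.ofReal '' {q : ℝ | 0 < q ∧ ∀ i, f i ≤ q}) := by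
  refine le_antisymm (le_sInf ?_) (le_of_forall_gt fun r hr => ?_)
  · rintro _ ⟨q, ⟨-, hq⟩, rfl⟩
    exact iSup_le fun i => ENNReal.ofReal_le_ofReal (hq i)
  · obtain ⟨r', hr', hr'r⟩ := exists_between hr
    have hr'_top : r' ≠ ⊤ := hr'r.ne_top
    have hbound (i : ι) : f i ≤ r'.toReal := (ENNReal.ofReal_le_iff_le_toReal hr'_top).1
      ((le_iSup (fun i => ENNReal.ofReal (f i)) i).trans hr'.le)
    have hpos : 0 < r'.toReal := ENNReal.toReal_pos (bot_le.trans_lt hr').ne' hr'_top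
    have hmem : r' ∈ ENNReal.ofReal '' {q : ℝ | 0 < q ∧ ∀ i, f i ≤ q} :=
      ⟨r'.toReal, ⟨hpos, hbound⟩, ENNReal.ofReal_toReal hr'_top⟩
    exact (sInf_le hmem).trans_lt hr'r

theorem antitoneOn_of_hasDerivWithinAt_Ioi_nonpos {D : Set ℝ} {f f' : ℝ → ℝ}
    (hD : D.OrdConnected) (hf : ContinuousOn f D)
    (hf' : ∀ x ∈ D, HasDerivWithinAt f (f' x) (Ioi x) x) (hf'₀ : ∀ x ∈ D, f' x ≤ 0) :
    AntitoneOn f D := by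
  intro a ha b hb hab
  have hsub : Ico a b ⊆ D := Ico_subset_Icc_self.trans (hD.out ha hb)
  exact image_le_of_deriv_right_le_deriv_boundary (hf.mono (hD.out ha hb))
    (fun x hx => (hf' x (hsub hx)).Ici_of_Ioi) (B := fun _ => f a) le_rfl continuousOn_const
    (fun x _ => hasDerivWithinAt_const x _ _) (fun x hx => hf'₀ x (hsub hx)) ⟨hab, le_rfl⟩

theorem HasDerivWithinAt.le_of_eventually_le_Ioi {f g : ℝ → ℝ} {f' g' x : ℝ}
    (hf : HasDerivWithinAt f f' (Ioi x) x) (hg : HasDerivWithinAt g g' (Ioi x) x)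
    (hfg : f ≤ᶠ[𝓝[>] x] g) (hx : f x = g x) : f' ≤ g' := by
  rw [hasDerivWithinAt_iff_tendsto_slope' self_notMem_Ioi] at hf hg
  refine le_of_tendsto_of_tendsto hf hg ?_
  filter_upwards [hfg, self_mem_nhdsWithin] with y hy hxy
  rw [slope_def_field, slope_def_field, hx]
  exact div_le_div_of_nonneg_right (by linarith) (sub_pos.2 hxy).le

theorem antitoneOn_rpow_neg_mul_of_mul_le {f f' : ℝ → ℝ} {q : ℝ} (hf : ContinuousOn f (Ioi 0))
    (hf' : ∀ t > 0, HasDerivWithinAt f (f' t) (Ioi t) t) (hq : ∀ t > 0, t * f' t ≤ q * f t) :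
    AntitoneOn (fun t => t ^ (-q) * f t) (Ioi 0) := by
  refine antitoneOn_of_hasDerivWithinAt_Ioi_nonpos ordConnected_Ioi
    ((continuousOn_id.rpow_const fun t ht => Or.inl (ne_of_gt ht)).mul hf)
    (f' := fun t => t ^ (-q - 1) * (t * f' t - q * f t)) (fun t ht => ?_)
    (fun t ht => mul_nonpos_of_nonneg_of_nonpos (Real.rpow_nonneg (le_of_lt ht) _)
      (sub_nonpos.2 (hq t ht)))
  have ht0 : t ≠ 0 := ne_of_gt ht
  refine ((Real.hasDerivAt_rpow_const (Or.inl ht0)).hasDerivWithinAt.mul (hf' t ht)).congr_deriv ?_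
  rw [Real.rpow_sub_one ht0]
  field_simp
  ring

theorem mul_le_of_antitoneOn_rpow_neg_mul {f : ℝ → ℝ} {f' q t : ℝ} (ht : 0 < t)
    (hf : HasDerivWithinAt f f' (Ioi t) t)
    (hanti : AntitoneOn (fun s => s ^ (-q) * f s) (Ioi 0)) : t * f' ≤ q * f t := by
  set c := t ^ (-q) * f t
  have hunscale {s : ℝ} (hs : 0 < s) : f s = s ^ (-q) * f s * s ^ q := by
    rw [mul_right_comm, ← Real.rpow_add hs, neg_add_cancel, Real.rpow_zero, one_mul]
  have hfg : ∀ s ∈ Ioi t, f s ≤ c * s ^ q := by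
    intro s hs
    have hs0 : 0 < s := ht.trans hs
    rw [hunscale hs0]
    gcongr
    exact hanti ht hs0 (le_of_lt hs)
  have hg : HasDerivWithinAt (fun s => c * s ^ q) (c * (q * t ^ (q - 1))) (Ioi t) t :=
    ((Real.hasDerivAt_rpow_const (Or.inl ht.ne')).const_mul c).hasDerivWithinAt
  -- `f` lies below `s ↦ c s^q` to the right of `t` and touches it at `t`.
  have hle := hf.le_of_eventually_le_Ioi hg (eventually_mem_nhdsWithin.mono hfg) (hunscale ht)
  calc t * f' ≤ t * (c * (q * t ^ (q - 1))) := by gcongr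
    _ = q * (c * t ^ q) := by rw [Real.rpow_sub_one ht.ne']; field_simp
    _ = q * f t := by rw [← hunscale ht]

namespace IsOrliczFunction

variable {Φ : ℝ → ℝ}

theorem hasDerivWithinAt_rightDeriv (hΦ : IsOrliczFunction Φ) {t : ℝ} (ht : 0 < t) :
    HasDerivWithinAt Φ (rightDeriv Φ t) (Ioi t) t :=
  hΦ.2.1.hasDerivWithinAt_rightDeriv_of_mem_interior (by rwa [interior_Ici])

theorem antitoneOn_rpow_neg_mul_iff (hΦ : IsOrliczFunction Φ) (q : ℝ) :
    AntitoneOn (fun t => t ^ (-q) * Φ t) (Ioi 0) ↔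
      ∀ t : Ioi (0 : ℝ), (t : ℝ) * rightDeriv Φ t / Φ t ≤ q := by
  have ⟨hcont, _, _, _, hpos, _⟩ := hΦ
  constructor
  · rintro hanti ⟨t, ht⟩
    rw [div_le_iff₀ (hpos t ht)]
    exact mul_le_of_antitoneOn_rpow_neg_mul ht (hΦ.hasDerivWithinAt_rightDeriv ht) hanti
  · intro hq
    exact antitoneOn_rpow_neg_mul_of_mul_le (hcont.mono Ioi_subset_Ici_self)
      (fun t ht => hΦ.hasDerivWithinAt_rightDeriv ht)
      (fun t ht => (div_le_iff₀ (hpos t ht)).1 (hq ⟨t, ht⟩))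

end IsOrliczFunction

/-- The upper Orlicz index: `sup_{t>0} t Φ'₊(t)/Φ(t)` equals
`inf {q > 0 : t ↦ t^{-q} Φ(t) is nonincreasing on (0,∞)}`, as elements of `(0,∞]`
(in `ℝ≥0∞` the infimum of the empty set is `∞`). -/
theorem orlicz_upper_index_eq (Φ : ℝ → ℝ) (hΦ : IsOrliczFunction Φ) :
    (⨆ t : Ioi (0 : ℝ), ENNReal.ofReal ((t : ℝ) * rightDeriv Φ t / Φ t)) =
      sInf (ENNReal.ofReal ''
        {q : ℝ | 0 < q ∧ AntitoneOn (fun t : ℝ => t ^ (-q) * Φ t) (Ioi 0)}) := by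
  simp only [hΦ.antitoneOn_rpow_neg_mul_iff]
  exact ENNReal.iSup_ofReal_eq_sInf_ofReal_pos_bounds _
end

section
/- Let (X, μ) be a measure space, f : X → ℂ measurable, and Φ an Orlicz function. Suppose the set S = {c > 0 : λ_f(s)·Φ(s/c) ≤ 1 for all s > 0} is nonempty and c₀ := inf S > 0. Then the infimum is attained in the sense that λ_f(s)·Φ(s/c₀) ≤ 1 for all s > 0; that is, if ‖f‖_{L^w_Φ} > 0 then sup_{s>0} λ_f(s)·Φ(s/‖f‖_{L^w_Φ}) ≤ 1. (Commutative case of Proposition 3.3(1).) -/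
open Set Filter MeasureTheory
open scoped ENNReal

/-- The distribution function `λ_f(s) = μ {x : |f(x)| > s}`, a value in `[0,∞]`. -/
noncomputable def distrib {X : Type*} [MeasurableSpace X] (μ : Measure X) (f : X → ℂ)
    (s : ℝ) : ℝ≥0∞ :=
  μ {x | s < ‖f x‖}

/-- The weak Orlicz quasinorm `‖f‖_{L^w_Φ} = inf {c > 0 : λ_f(s) Φ(s/c) ≤ 1 for all s > 0}`,
as an element of `[0,∞]` (the infimum of the empty set being `∞`). -/
noncomputable def wOrliczNorm {X : Type*} [MeasurableSpace X] (μ : Measure X) (Φ : ℝ → ℝ)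
    (f : X → ℂ) : ℝ≥0∞ :=
  sInf (ENNReal.ofReal ''
    {c : ℝ | 0 < c ∧ ∀ s > 0, distrib μ f s * ENNReal.ofReal (Φ (s / c)) ≤ 1})

/-!
The map `c ↦ λ_f(s) Φ(s/c)` is continuous at every `c > 0`: `Φ` is continuous at `s/c > 0`, and
multiplying by the possibly infinite constant `λ_f(s)` is harmless because `Φ(s/c) > 0`. The
inequality `λ_f(s) Φ(s/c) ≤ 1` therefore passes from `S` to its closure, which contains `inf S`.
-/

namespace IsOrliczFunction

variable {Φ : ℝ → ℝ}

theorem pos (hΦ : IsOrliczFunction Φ) {t : ℝ} (ht : 0 < t) : 0 < Φ t :=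
  hΦ.2.2.2.2.1 t ht

theorem continuousAt (hΦ : IsOrliczFunction Φ) {t : ℝ} (ht : 0 < t) : ContinuousAt Φ t :=
  hΦ.1.continuousAt (Ici_mem_nhds ht)

theorem continuousAt_const_mul_ofReal_div (hΦ : IsOrliczFunction Φ) (a : ℝ≥0∞) {s c : ℝ}
    (hs : 0 < s) (hc : 0 < c) :
    ContinuousAt (fun c => a * ENNReal.ofReal (Φ (s / c))) c := by
  have hdiv : ContinuousAt (fun c : ℝ => s / c) c :=
    continuousAt_const.div continuousAt_id hc.ne'
  have hΦdiv : ContinuousAt (fun c => ENNReal.ofReal (Φ (s / c))) c :=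
    ENNReal.continuous_ofReal.continuousAt.comp ((hΦ.continuousAt (div_pos hs hc)).comp hdiv)
  exact ENNReal.Tendsto.const_mul hΦdiv
    (Or.inl (ENNReal.ofReal_pos.mpr (hΦ.pos (div_pos hs hc))).ne')

end IsOrliczFunction

theorem wOrliczNorm_inf_attained_general {X : Type*} [MeasurableSpace X] (μ : Measure X)
    (f : X → ℂ) (Φ : ℝ → ℝ) (hΦ : IsOrliczFunction Φ)
    (hne : {c : ℝ | 0 < c ∧ ∀ s > 0, distrib μ f s * ENNReal.ofReal (Φ (s / c)) ≤ 1}.Nonempty)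
    (hpos : 0 < sInf {c : ℝ | 0 < c ∧ ∀ s > 0,
      distrib μ f s * ENNReal.ofReal (Φ (s / c)) ≤ 1}) :
    ∀ s > 0, distrib μ f s * ENNReal.ofReal
      (Φ (s / sInf {c : ℝ | 0 < c ∧ ∀ s > 0,
        distrib μ f s * ENNReal.ofReal (Φ (s / c)) ≤ 1})) ≤ 1 := by
  intro s hs
  have hinf_mem_closure := csInf_mem_closure hne ⟨0, fun c hc => hc.1.le⟩
  have hcont := hΦ.continuousAt_const_mul_ofReal_div (distrib μ f s) hs hpos
  exact hcont.continuousWithinAt.closure_le hinf_mem_closure continuousWithinAt_const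
    fun c hc => hc.2 s hs

/-- If the set `S = {c > 0 : λ_f(s) Φ(s/c) ≤ 1 for all s > 0}` is nonempty and its (real)
infimum `c₀` is positive, then the infimum is attained: `λ_f(s) Φ(s/c₀) ≤ 1` for all `s > 0`. -/
theorem wOrliczNorm_inf_attained {X : Type*} [MeasurableSpace X] (μ : Measure X)
    (f : X → ℂ) (hf : Measurable f) (Φ : ℝ → ℝ) (hΦ : IsOrliczFunction Φ)
    (hne : {c : ℝ | 0 < c ∧ ∀ s > 0, distrib μ f s * ENNReal.ofReal (Φ (s / c)) ≤ 1}.Nonempty)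
    (hpos : 0 < sInf {c : ℝ | 0 < c ∧ ∀ s > 0,
      distrib μ f s * ENNReal.ofReal (Φ (s / c)) ≤ 1}) :
    ∀ s > 0, distrib μ f s * ENNReal.ofReal
      (Φ (s / sInf {c : ℝ | 0 < c ∧ ∀ s > 0,
        distrib μ f s * ENNReal.ofReal (Φ (s / c)) ≤ 1})) ≤ 1 :=
  wOrliczNorm_inf_attained_general μ f Φ hΦ hne hpos
end

section
/- Let (X, μ) be a measure space and Φ an Orlicz function. The weak Orlicz space is complete: if (f_n) is a sequence of a.e.-finite measurable functions on X that is Cauchy for the weak Orlicz quasinorm (i.e., for every ε > 0 there is N such that ‖f_n − f_m‖_{L^w_Φ} < ε for all n, m ≥ N), then there exists an a.e.-finite measurable function f on X such that ‖f_n − f‖_{L^w_Φ} → 0. (Commutative case of Proposition 3.4(2).) -/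
/-!
A Cauchy sequence for the weak Orlicz quasinorm is Cauchy in measure: since `Φ(t) → ∞`,
`λ_h(s) ≤ 1 / Φ(s / c)` is small once `‖h‖_{L^w_Φ} < c` is small. By Borel–Cantelli a
subsequence `f (φ k)` converges a.e. to a measurable `g`. The distribution function is lower
semicontinuous under a.e. convergence (a point with `s < ‖G x‖` eventually has `s < ‖F k x‖`),
so the bounds `‖f m - f (φ k)‖_{L^w_Φ} < c` pass to the limit `‖f m - g‖_{L^w_Φ} ≤ c`.
-/

open Set Filter MeasureTheory
open scoped ENNReal

open scoped Topology

namespace MeasureTheory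

variable {X E : Type*} [MeasurableSpace X] {μ : Measure X}

def CauchyInMeasure [SeminormedAddCommGroup E] (μ : Measure X) (f : ℕ → X → E) : Prop :=
  ∀ s > 0, ∀ δ > 0, ∃ N, ∀ n ≥ N, ∀ m ≥ N,
    μ {x | s < ‖f n x - f m x‖} ≤ ENNReal.ofReal δ

theorem measure_lt_norm_le_of_ae_tendsto [SeminormedAddCommGroup E] {F : ℕ → X → E}
    {G : X → E} (hlim : ∀ᵐ x ∂μ, Tendsto (fun k => F k x) atTop (𝓝 (G x))) {s : ℝ}
    {B : ℝ≥0∞} (hB : ∀ᶠ k in atTop, μ {x | s < ‖F k x‖} ≤ B) :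
    μ {x | s < ‖G x‖} ≤ B := by
  obtain ⟨N, hN⟩ := eventually_atTop.1 hB
  set S : ℕ → Set X := fun M => ⋂ k, ⋂ (_ : M ≤ k), {x | s < ‖F k x‖}
  have hS : Monotone S := fun M M' hM x hx =>
    mem_iInter₂.2 fun k hk => mem_iInter₂.1 hx k (hM.trans hk)
  have hsub : {x | s < ‖G x‖} ≤ᵐ[μ] ⋃ M, S M := by
    filter_upwards [hlim] with x hx hxs
    obtain ⟨M, hM⟩ := eventually_atTop.1 (hx.norm.eventually_const_lt hxs)
    exact mem_iUnion.2 ⟨M, mem_iInter₂.2 hM⟩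
  calc μ {x | s < ‖G x‖} ≤ μ (⋃ M, S M) := measure_mono_ae hsub
    _ = ⨆ M, μ (S M) := hS.measure_iUnion
    _ ≤ B := iSup_le fun M =>
      (measure_mono (iInter₂_subset (max M N) (le_max_left M N))).trans (hN _ (le_max_right M N))

theorem ae_exists_tendsto_of_summable_measure_norm_sub_succ [NormedAddCommGroup E]
    [CompleteSpace E] {g : ℕ → X → E} {ε : ℕ → ℝ} (hε : Summable ε)
    (h : ∑' k, μ {x | ε k < ‖g (k + 1) x - g k x‖} ≠ ∞) :
    ∀ᵐ x ∂μ, ∃ l, Tendsto (fun k => g k x) atTop (𝓝 l) := by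
  filter_upwards [ae_eventually_notMem h] with x hx
  have hdist : Summable fun k => dist (g k x) (g (k + 1) x) :=
    hε.of_norm_bounded_eventually_nat <| hx.mono fun k hk => by
      simpa [dist_eq_norm, norm_sub_rev] using hk
  exact cauchySeq_tendsto_of_complete (cauchySeq_of_summable_dist hdist)

theorem CauchyInMeasure.exists_strictMono_ae_tendsto [NormedAddCommGroup E] [CompleteSpace E]
    {f : ℕ → X → E} (hf : CauchyInMeasure μ f) :
    ∃ φ : ℕ → ℕ, StrictMono φ ∧ ∀ᵐ x ∂μ, ∃ l, Tendsto (fun k => f (φ k) x) atTop (𝓝 l) := by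
  choose N hN using fun k : ℕ => hf ((1 / 2) ^ k) (by positivity) ((1 / 2) ^ k) (by positivity)
  obtain ⟨φ, hφ, hNφ⟩ :=
    extraction_forall_of_eventually' (P := fun k j => N k ≤ j) fun k => ⟨N k, fun _ => id⟩
  refine ⟨φ, hφ, ae_exists_tendsto_of_summable_measure_norm_sub_succ summable_geometric_two ?_⟩
  refine ne_top_of_le_ne_top ?_ (ENNReal.tsum_le_tsum fun k =>
    hN k _ ((hNφ k).trans (hφ k.lt_succ_self).le) _ (hNφ k))
  rw [← ENNReal.ofReal_tsum_of_nonneg (fun k => by positivity) summable_geometric_two]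
  exact ENNReal.ofReal_ne_top

end MeasureTheory

section WeakOrlicz

variable {X : Type*} [MeasurableSpace X] {μ : Measure X} {Φ : ℝ → ℝ}

theorem wOrliczNorm_le_ofReal {h : X → ℂ} {c : ℝ} (hc : 0 < c)
    (hh : ∀ s > 0, distrib μ h s * ENNReal.ofReal (Φ (s / c)) ≤ 1) :
    wOrliczNorm μ Φ h ≤ ENNReal.ofReal c :=
  sInf_le ⟨c, ⟨hc, hh⟩, rfl⟩

theorem distrib_le_inv_of_wOrliczNorm_lt (hmono : MonotoneOn Φ (Ici 0)) {h : X → ℂ} {c : ℝ}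
    (hc : 0 < c) (hh : wOrliczNorm μ Φ h < ENNReal.ofReal c) {s : ℝ} (hs : 0 < s) :
    distrib μ h s ≤ (ENNReal.ofReal (Φ (s / c)))⁻¹ := by
  obtain ⟨_, ⟨c', ⟨hc', hc'h⟩, rfl⟩, hc'c⟩ := sInf_lt_iff.1 hh
  have hΦ : Φ (s / c) ≤ Φ (s / c') :=
    hmono (mem_Ici.2 (by positivity)) (mem_Ici.2 (by positivity))
      (by gcongr; exact ((ENNReal.ofReal_lt_ofReal_iff hc).1 hc'c).le)
  exact ENNReal.le_inv_iff_mul_le.2 <|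
    (mul_le_mul_right (ENNReal.ofReal_le_ofReal hΦ) _).trans (hc'h s hs)

theorem exists_pos_forall_distrib_le_of_wOrliczNorm_lt (hmono : MonotoneOn Φ (Ici 0))
    (htop : Tendsto Φ atTop atTop) {s δ : ℝ} (hs : 0 < s) (hδ : 0 < δ) :
    ∃ c > 0, ∀ h : X → ℂ, wOrliczNorm μ Φ h < ENNReal.ofReal c →
      distrib μ h s ≤ ENNReal.ofReal δ := by
  obtain ⟨t, hΦt, ht⟩ := ((htop.eventually_ge_atTop δ⁻¹).and (eventually_gt_atTop 0)).exists
  refine ⟨s / t, by positivity, fun h hh => ?_⟩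
  calc distrib μ h s ≤ (ENNReal.ofReal (Φ (s / (s / t))))⁻¹ :=
        distrib_le_inv_of_wOrliczNorm_lt hmono (by positivity) hh hs
    _ = (ENNReal.ofReal (Φ t))⁻¹ := by rw [div_div_cancel₀ hs.ne']
    _ ≤ (ENNReal.ofReal δ⁻¹)⁻¹ := ENNReal.inv_le_inv.2 (ENNReal.ofReal_le_ofReal hΦt)
    _ = ENNReal.ofReal δ := by rw [ENNReal.ofReal_inv_of_pos hδ, inv_inv]

theorem cauchyInMeasure_of_wOrliczNorm_cauchy (hmono : MonotoneOn Φ (Ici 0))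
    (htop : Tendsto Φ atTop atTop) {f : ℕ → X → ℂ}
    (hcauchy : ∀ ε : ℝ, 0 < ε → ∃ N : ℕ, ∀ n ≥ N, ∀ m ≥ N,
      wOrliczNorm μ Φ (fun x => f n x - f m x) < ENNReal.ofReal ε) :
    CauchyInMeasure μ f := by
  intro s hs δ hδ
  obtain ⟨c, hc, hdistrib⟩ :=
    exists_pos_forall_distrib_le_of_wOrliczNorm_lt (μ := μ) hmono htop hs hδ
  obtain ⟨N, hN⟩ := hcauchy c hc
  exact ⟨N, fun n hn m hm => hdistrib _ (hN n hn m hm)⟩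

theorem wOrliczNorm_le_of_ae_tendsto (hmono : MonotoneOn Φ (Ici 0)) {F : ℕ → X → ℂ}
    {G : X → ℂ} (hlim : ∀ᵐ x ∂μ, Tendsto (fun k => F k x) atTop (𝓝 (G x))) {c : ℝ}
    (hc : 0 < c) (hF : ∀ᶠ k in atTop, wOrliczNorm μ Φ (F k) < ENNReal.ofReal c) :
    wOrliczNorm μ Φ G ≤ ENNReal.ofReal c :=
  wOrliczNorm_le_ofReal hc fun _ hs => ENNReal.le_inv_iff_mul_le.1 <|
    measure_lt_norm_le_of_ae_tendsto hlim <|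
      hF.mono fun _ hk => distrib_le_inv_of_wOrliczNorm_lt hmono hc hk hs

end WeakOrlicz

/-- The weak Orlicz space is complete: any Cauchy sequence for the weak Orlicz quasinorm
converges in the weak Orlicz quasinorm to some measurable function. -/
theorem wOrliczNorm_complete {X : Type*} [MeasurableSpace X] (μ : Measure X)
    (Φ : ℝ → ℝ) (hΦ : IsOrliczFunction Φ)
    (f : ℕ → X → ℂ) (hf : ∀ n, Measurable (f n))
    (hcauchy : ∀ ε : ℝ, 0 < ε → ∃ N : ℕ, ∀ n ≥ N, ∀ m ≥ N,
      wOrliczNorm μ Φ (fun x => f n x - f m x) < ENNReal.ofReal ε) :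
    ∃ g : X → ℂ, Measurable g ∧
      Tendsto (fun n => wOrliczNorm μ Φ (fun x => f n x - g x)) atTop (nhds 0) := by
  obtain ⟨-, -, hmono, -, -, htop⟩ := hΦ
  obtain ⟨φ, hφ, hφconv⟩ :=
    (cauchyInMeasure_of_wOrliczNorm_cauchy hmono htop hcauchy).exists_strictMono_ae_tendsto
  obtain ⟨g, hg, hφg⟩ :=
    measurable_limit_of_tendsto_metrizable_ae (fun k => (hf (φ k)).aemeasurable) hφconv
  refine ⟨g, hg, ENNReal.tendsto_nhds_zero.2 fun ε hε => ?_⟩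
  obtain ⟨r, -, hr, hrε⟩ := ENNReal.lt_iff_exists_real_btwn.1 hε
  have hr0 : 0 < r := ENNReal.ofReal_pos.1 hr
  obtain ⟨N, hN⟩ := hcauchy r hr0
  refine eventually_atTop.2 ⟨N, fun m hm => le_trans ?_ hrε.le⟩
  refine wOrliczNorm_le_of_ae_tendsto hmono (hφg.mono fun x hx => tendsto_const_nhds.sub hx) hr0 ?_
  exact eventually_atTop.2 ⟨N, fun k hk => hN m hm (φ k) (hk.trans (hφ.id_le k))⟩
end

section
/- Marcinkiewicz-type interpolation for weak Orlicz spaces (commutative case of Theorem 4.2): Let (X, μ) and (Y, ν) be σ-finite measure spaces and 0 < p₀ < p₁ ≤ ∞. Let T be a map from L^{p₀}(μ) + L^{p₁}(μ) to a.e.-finite measurable functions on Y such that: (i) |T(α·f)| ≤ |α|·|Tf| ν-a.e. for every scalar α and every f; (ii) there is K ≥ 1 with |T(f+g)| ≤ K·(|Tf| + |Tg|) ν-a.e. for all f, g (T is quasilinear); (iii) there are constants A₀, A₁ > 0 such that for i = 0, 1, s·ν{|Tf| > s}^{1/p_i} ≤ A_i·‖f‖_{L^{p_i}(μ)} for all s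 > 0 and all f ∈ L^{p_i}(μ) (for p₁ = ∞ this means ‖Tf‖_{L^∞(ν)} ≤ A₁·‖f‖_{L^∞(μ)}); i.e., T is simultaneously of weak type (p₀,p₀) and (p₁,p₁). Let Φ be an Orlicz function for which there exist r₀, r₁ with p₀ < r₀ ≤ r₁ < p₁, t ↦ t^{−r₀}Φ(t) nondecreasing on (0,∞), and t ↦ t^{−r₁}Φ(t) nonincreasing on (0,∞) (this expresses p₀ < a_Φ ≤ b_Φ < p₁). Then there exists a constant C > 0, depending only on K, A₀, A₁, p₀, p₁, r₀, r₁, such that sup_{s>0} ν{|Tf| > s}·Φ(s) ≤ C·sup_{s>0} μ{|f| > s}·Φ(s) for every f in the domain (both sides in [0,∞]). -/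
open Set Filter MeasureTheory
open scoped ENNReal

/-- `T` is of weak type `(p,p)` with constant `A`: for finite `p` this means
`s · ν{|Tf| > s}^{1/p} ≤ A ‖f‖_{L^p(μ)}` for all `s > 0`, and for `p = ∞` it means
`‖Tf‖_{L^∞(ν)} ≤ A ‖f‖_{L^∞(μ)}`. -/
def HasWeakTypePP {X Y : Type*} [MeasurableSpace X] [MeasurableSpace Y]
    (μ : Measure X) (ν : Measure Y) (T : (X → ℂ) → Y → ℂ) (p : ℝ≥0∞) (A : ℝ) : Prop :=
  ∀ f : X → ℂ, MemLp f p μ →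
    (p = ⊤ → eLpNormEssSup (T f) ν ≤ ENNReal.ofReal A * eLpNorm f ⊤ μ) ∧
    (p ≠ ⊤ → ∀ s > 0, ENNReal.ofReal s * (ν {y | s < ‖T f y‖}) ^ (1 / p.toReal) ≤
      ENNReal.ofReal A * eLpNorm f p μ)

/-!
Fix a level `s > 0`, put `u = s / (2K)` and `a = u / (A₁ + 1)`, and cut `f` at height `a` into
`g = f · 1_{|f| > a}` and `h = f · 1_{|f| ≤ a}`. Quasilinearity gives
`ν{|Tf| > s} ≤ ν{|Tg| > u} + ν{|Th| > u}`, and the weak-type bounds reduce the two terms to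
`‖g‖_{p₀}^{p₀}` and `‖h‖_{p₁}^{p₁}` (for `p₁ = ∞`, `‖Th‖_∞ ≤ A₁ a ≤ u` kills the second term).

With `M` the weak `Φ`-moment of `f`, the two monotonicity conditions on `Φ` give
`λ_f(t) ≤ (M / Φ(a)) (t / a)^(-r₀)` for `t ≥ a` and `λ_f(t) ≤ (M / Φ(a)) (t / a)^(-r₁)` for
`t ≤ a`. Summing over the dyadic shells `2ⁿa < |f| ≤ 2ⁿ⁺¹a`, resp. `a/2ⁿ⁺¹ < |f| ≤ a/2ⁿ`, gives
geometric series that converge because `p₀ < r₀` and `r₁ < p₁`, so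
`‖g‖_{p₀}^{p₀} ≲ a^{p₀} M / Φ(a)` and `‖h‖_{p₁}^{p₁} ≲ a^{p₁} M / Φ(a)`. Finally
`Φ(s) ≤ (s / a)^{r₁} Φ(a)` and `s / a = 2K(A₁ + 1)`, so all powers of `a` cancel.
-/

theorem div_rpow_mul_le_of_rpow_neg_mul_le {a t r x y : ℝ} (ha : 0 < a) (ht : 0 < t)
    (h : a ^ (-r) * x ≤ t ^ (-r) * y) : (t / a) ^ r * x ≤ y := by
  have htr : 0 < t ^ r := Real.rpow_pos_of_pos ht r
  calc (t / a) ^ r * x = t ^ r * (a ^ (-r) * x) := by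
        rw [Real.div_rpow ht.le ha.le, Real.rpow_neg ha.le]; ring
    _ ≤ t ^ r * (t ^ (-r) * y) := by gcongr
    _ = y := by rw [Real.rpow_neg ht.le, ← mul_assoc, mul_inv_cancel₀ htr.ne', one_mul]

theorem le_div_rpow_mul_of_rpow_neg_mul_le {a t r x y : ℝ} (ha : 0 < a) (ht : 0 < t)
    (h : t ^ (-r) * y ≤ a ^ (-r) * x) : y ≤ (t / a) ^ r * x := by
  have htr : 0 < t ^ r := Real.rpow_pos_of_pos ht r
  calc y = t ^ r * (t ^ (-r) * y) := by
        rw [Real.rpow_neg ht.le, ← mul_assoc, mul_inv_cancel₀ htr.ne', one_mul]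
    _ ≤ t ^ r * (a ^ (-r) * x) := by gcongr
    _ = (t / a) ^ r * x := by rw [Real.div_rpow ht.le ha.le, Real.rpow_neg ha.le]; ring

theorem exists_two_pow_mul_lt_le {a t : ℝ} (ha : 0 < a) (hat : a < t) :
    ∃ n : ℕ, 2 ^ n * a < t ∧ t ≤ 2 ^ (n + 1) * a := by
  obtain ⟨k, hk⟩ := exists_mem_Ioc_zpow (div_pos (ha.trans hat) ha) (one_lt_two (α := ℝ))
  have hk0 : 0 ≤ k := by
    by_contra! hk0
    have : (2 : ℝ) ^ (k + 1) ≤ 1 := zpow_le_one_of_nonpos₀ one_le_two (by omega)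
    have := (one_lt_div ha).2 hat
    linarith [hk.2]
  lift k to ℕ using hk0
  refine ⟨k, ?_⟩
  rw [← lt_div_iff₀ ha, ← div_le_iff₀ ha]
  exact_mod_cast hk

theorem exists_div_two_pow_lt_le {a t : ℝ} (ht : 0 < t) (hta : t ≤ a) :
    ∃ n : ℕ, a / 2 ^ (n + 1) < t ∧ t ≤ a / 2 ^ n := by
  have ha := ht.trans_le hta
  obtain ⟨n, hn⟩ := exists_nat_pow_near_of_lt_one (div_pos ht ha) ((div_le_one ha).2 hta)
    (one_half_pos (α := ℝ)) one_half_lt_one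
  rw [lt_div_iff₀ ha, div_le_iff₀ ha, one_div_pow, one_div_pow, one_div_mul_eq_div,
    one_div_mul_eq_div] at hn
  exact ⟨n, hn⟩

theorem two_pow_succ_mul_rpow_mul_two_pow_rpow_neg {a : ℝ} (ha : 0 ≤ a) (q r : ℝ) (n : ℕ) :
    (2 ^ (n + 1) * a) ^ q * ((2 : ℝ) ^ n) ^ (-r) = 2 ^ q * a ^ q * (2 ^ (q - r)) ^ n := by
  rw [Real.mul_rpow (by positivity) ha, ← Real.rpow_natCast, ← Real.rpow_natCast,
    ← Real.rpow_mul zero_le_two, ← Real.rpow_mul zero_le_two,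
    ← Real.rpow_mul_natCast zero_le_two (q - r)]
  have h : (2 : ℝ) ^ (((n + 1 : ℕ) : ℝ) * q) * 2 ^ ((n : ℝ) * -r) =
      2 ^ q * 2 ^ ((q - r) * n) := by
    rw [← Real.rpow_add two_pos, ← Real.rpow_add two_pos]; push_cast; ring_nf
  linear_combination a ^ q * h

theorem div_two_pow_rpow_mul_two_pow_succ_rpow {a : ℝ} (ha : 0 ≤ a) (q r : ℝ) (n : ℕ) :
    (a / 2 ^ n) ^ q * ((2 : ℝ) ^ (n + 1)) ^ r = 2 ^ r * a ^ q * (2 ^ (r - q)) ^ n := by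
  rw [Real.div_rpow ha (by positivity), ← Real.rpow_natCast, ← Real.rpow_natCast,
    ← Real.rpow_mul zero_le_two, ← Real.rpow_mul zero_le_two,
    ← Real.rpow_mul_natCast zero_le_two (r - q), div_eq_mul_inv, ← Real.rpow_neg zero_le_two]
  have h : (2 : ℝ) ^ (-((n : ℝ) * q)) * 2 ^ (((n + 1 : ℕ) : ℝ) * r) =
      2 ^ r * 2 ^ ((r - q) * n) := by
    rw [← Real.rpow_add two_pos, ← Real.rpow_add two_pos]; push_cast; ring_nf
  linear_combination a ^ q * h

section Distribution

variable {X E : Type*} [MeasurableSpace X] [NormedAddCommGroup E] {μ : Measure X}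
  {F : X → E} {Φ : ℝ → ℝ} {M : ℝ≥0∞} {a q r : ℝ}

theorem setLIntegral_le_of_subset_iUnion_geometric {g : X → ℝ≥0∞} {s : Set X} {S : ℕ → Set X}
    (hs : s ⊆ ⋃ n, S n) {D : ℝ≥0∞} {c w : ℝ} (hc : 0 ≤ c) (hw₀ : 0 ≤ w) (hw₁ : w < 1)
    (hS : ∀ n, ∫⁻ x in S n, g x ∂μ ≤ D * ENNReal.ofReal (c * w ^ n)) :
    ∫⁻ x in s, g x ∂μ ≤ D * ENNReal.ofReal (c / (1 - w)) :=
  calc ∫⁻ x in s, g x ∂μ ≤ ∫⁻ x in ⋃ n, S n, g x ∂μ := lintegral_mono_set hs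
    _ ≤ ∑' n, ∫⁻ x in S n, g x ∂μ := lintegral_iUnion_le _ _
    _ ≤ ∑' n, D * ENNReal.ofReal (c * w ^ n) := ENNReal.tsum_le_tsum hS
    _ = D * ENNReal.ofReal (c / (1 - w)) := by
      rw [ENNReal.tsum_mul_left, ← ENNReal.ofReal_tsum_of_nonneg (fun n => by positivity)
        ((summable_geometric_of_lt_one hw₀ hw₁).mul_left c), tsum_mul_left,
        tsum_geometric_of_lt_one hw₀ hw₁, div_eq_mul_inv]

theorem setLIntegral_enorm_rpow_le {S : Set X} {b : ℝ} (hq : 0 ≤ q)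
    (hb : ∀ x ∈ S, ‖F x‖ ≤ b) :
    ∫⁻ x in S, ‖F x‖ₑ ^ q ∂μ ≤ ENNReal.ofReal b ^ q * μ S :=
  calc ∫⁻ x in S, ‖F x‖ₑ ^ q ∂μ ≤ ∫⁻ _ in S, ENNReal.ofReal b ^ q ∂μ :=
        setLIntegral_mono measurable_const fun x hx => by
          rw [← ofReal_norm]; gcongr; exact hb x hx
    _ = ENNReal.ofReal b ^ q * μ S := setLIntegral_const _ _

theorem setLIntegral_norm_gt_enorm_rpow_le {D : ℝ≥0∞} (ha : 0 < a) (hq : 0 ≤ q) (hqr : q < r)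
    (hdist : ∀ t, a ≤ t → μ {x | t < ‖F x‖} ≤ D * ENNReal.ofReal ((t / a) ^ (-r))) :
    ∫⁻ x in {x | a < ‖F x‖}, ‖F x‖ₑ ^ q ∂μ ≤
      D * ENNReal.ofReal (2 ^ q * a ^ q / (1 - 2 ^ (q - r))) := by
  refine setLIntegral_le_of_subset_iUnion_geometric
    (S := fun n => {x | 2 ^ n * a < ‖F x‖ ∧ ‖F x‖ ≤ 2 ^ (n + 1) * a})
    (fun x hx => mem_iUnion.2 (exists_two_pow_mul_lt_le ha hx)) (by positivity) (by positivity)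
    (Real.rpow_lt_one_of_one_lt_of_neg one_lt_two (by linarith)) fun n => ?_
  have hdist_n := hdist (2 ^ n * a) (le_mul_of_one_le_left ha.le (one_le_pow₀ one_le_two))
  rw [mul_div_cancel_right₀ _ ha.ne'] at hdist_n
  calc ∫⁻ x in {x | 2 ^ n * a < ‖F x‖ ∧ ‖F x‖ ≤ 2 ^ (n + 1) * a}, ‖F x‖ₑ ^ q ∂μ
      ≤ ENNReal.ofReal (2 ^ (n + 1) * a) ^ q * μ {x | 2 ^ n * a < ‖F x‖} :=
        (setLIntegral_enorm_rpow_le hq fun x hx => hx.2).trans (by gcongr; exact And.left)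
    _ ≤ ENNReal.ofReal (2 ^ (n + 1) * a) ^ q * (D * ENNReal.ofReal (((2 : ℝ) ^ n) ^ (-r))) := by
        gcongr
    _ = D * ENNReal.ofReal (2 ^ q * a ^ q * (2 ^ (q - r)) ^ n) := by
        rw [ENNReal.ofReal_rpow_of_nonneg (by positivity) hq, mul_left_comm,
          ← ENNReal.ofReal_mul (by positivity), two_pow_succ_mul_rpow_mul_two_pow_rpow_neg ha.le]

theorem setLIntegral_norm_le_enorm_rpow_le {D : ℝ≥0∞} (ha : 0 < a) (hq : 0 < q) (hrq : r < q)
    (hdist : ∀ t, 0 < t → t ≤ a → μ {x | t < ‖F x‖} ≤ D * ENNReal.ofReal ((t / a) ^ (-r))) :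
    ∫⁻ x in {x | ‖F x‖ ≤ a}, ‖F x‖ₑ ^ q ∂μ ≤
      D * ENNReal.ofReal (2 ^ r * a ^ q / (1 - 2 ^ (r - q))) := by
  have hzero : ∫⁻ x in {x | ‖F x‖ ≤ 0}, ‖F x‖ₑ ^ q ∂μ = 0 :=
    nonpos_iff_eq_zero.1 <| (setLIntegral_enorm_rpow_le hq.le fun x hx => hx).trans_eq
      (by simp [ENNReal.zero_rpow_of_pos hq])
  have hshell (n : ℕ) :
      ∫⁻ x in {x | a / 2 ^ (n + 1) < ‖F x‖ ∧ ‖F x‖ ≤ a / 2 ^ n}, ‖F x‖ₑ ^ q ∂μ ≤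
        D * ENNReal.ofReal (2 ^ r * a ^ q * (2 ^ (r - q)) ^ n) := by
    have hdist_n := hdist (a / 2 ^ (n + 1)) (by positivity)
      (div_le_self ha.le (one_le_pow₀ one_le_two))
    rw [div_div_cancel_left' ha.ne', Real.inv_rpow (by positivity), Real.rpow_neg (by positivity),
      inv_inv] at hdist_n
    calc ∫⁻ x in {x | a / 2 ^ (n + 1) < ‖F x‖ ∧ ‖F x‖ ≤ a / 2 ^ n}, ‖F x‖ₑ ^ q ∂μ
        ≤ ENNReal.ofReal (a / 2 ^ n) ^ q * μ {x | a / 2 ^ (n + 1) < ‖F x‖} :=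
          (setLIntegral_enorm_rpow_le hq.le fun x hx => hx.2).trans (by gcongr; exact And.left)
      _ ≤ ENNReal.ofReal (a / 2 ^ n) ^ q * (D * ENNReal.ofReal (((2 : ℝ) ^ (n + 1)) ^ r)) := by
          gcongr
      _ = D * ENNReal.ofReal (2 ^ r * a ^ q * (2 ^ (r - q)) ^ n) := by
          rw [ENNReal.ofReal_rpow_of_nonneg (by positivity) hq.le, mul_left_comm,
            ← ENNReal.ofReal_mul (by positivity), div_two_pow_rpow_mul_two_pow_succ_rpow ha.le]
  calc ∫⁻ x in {x | ‖F x‖ ≤ a}, ‖F x‖ₑ ^ q ∂μ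
      ≤ ∫⁻ x in {x | ‖F x‖ ≤ 0} ∪ {x | 0 < ‖F x‖ ∧ ‖F x‖ ≤ a}, ‖F x‖ₑ ^ q ∂μ :=
        lintegral_mono_set fun x hx => by
          rcases (norm_nonneg (F x)).lt_or_eq with h | h
          exacts [Or.inr ⟨h, hx⟩, Or.inl h.ge]
    _ ≤ ∫⁻ x in {x | 0 < ‖F x‖ ∧ ‖F x‖ ≤ a}, ‖F x‖ₑ ^ q ∂μ :=
        (lintegral_union_le _ _ _).trans_eq (by rw [hzero, zero_add])
    _ ≤ _ := setLIntegral_le_of_subset_iUnion_geometric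
        (fun x hx => mem_iUnion.2 (exists_div_two_pow_lt_le hx.1 hx.2)) (by positivity)
        (by positivity) (Real.rpow_lt_one_of_one_lt_of_neg one_lt_two (by linarith)) hshell

theorem meas_lt_norm_le_of_rpow_neg_mul_le {t : ℝ}
    (hM : ∀ t > 0, μ {x | t < ‖F x‖} * ENNReal.ofReal (Φ t) ≤ M) (ha : 0 < a) (ht : 0 < t)
    (hΦa : 0 < Φ a) (hΦ : a ^ (-r) * Φ a ≤ t ^ (-r) * Φ t) :
    μ {x | t < ‖F x‖} ≤ M / ENNReal.ofReal (Φ a) * ENNReal.ofReal ((t / a) ^ (-r)) := by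
  have hgrow := div_rpow_mul_le_of_rpow_neg_mul_le ha ht hΦ
  have hta : 0 < (t / a) ^ r := by positivity
  have hΦt : 0 < Φ t := (mul_pos hta hΦa).trans_le hgrow
  calc μ {x | t < ‖F x‖} ≤ M / ENNReal.ofReal (Φ t) :=
        (ENNReal.le_div_iff_mul_le (Or.inl (ENNReal.ofReal_pos.2 hΦt).ne')
          (Or.inl ENNReal.ofReal_ne_top)).2 (hM t ht)
    _ ≤ M / ENNReal.ofReal ((t / a) ^ r * Φ a) := by gcongr
    _ = M / ENNReal.ofReal (Φ a) * ENNReal.ofReal ((t / a) ^ (-r)) := by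
        rw [ENNReal.ofReal_mul hta.le, Real.rpow_neg (by positivity),
          ENNReal.ofReal_inv_of_pos hta, div_eq_mul_inv, div_eq_mul_inv,
          ENNReal.mul_inv (Or.inr ENNReal.ofReal_ne_top) (Or.inl ENNReal.ofReal_ne_top),
          div_eq_mul_inv]
        ring

theorem lintegral_enorm_indicator_rpow {s : Set X} (hq : 0 < q)
    (hs : NullMeasurableSet s μ) :
    ∫⁻ x, ‖s.indicator F x‖ₑ ^ q ∂μ = ∫⁻ x in s, ‖F x‖ₑ ^ q ∂μ := by
  rw [← lintegral_indicator₀ hs]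
  congr 1 with x
  by_cases hx : x ∈ s <;> simp [hx, hq]

theorem lintegral_enorm_indicator_norm_gt_rpow_le (hF : AEStronglyMeasurable F μ)
    (hM : ∀ t > 0, μ {x | t < ‖F x‖} * ENNReal.ofReal (Φ t) ≤ M)
    (hΦ : MonotoneOn (fun t : ℝ => t ^ (-r) * Φ t) (Ioi 0)) (ha : 0 < a) (hΦa : 0 < Φ a)
    (hq : 0 < q) (hqr : q < r) :
    ∫⁻ x, ‖{x | a < ‖F x‖}.indicator F x‖ₑ ^ q ∂μ ≤
      M / ENNReal.ofReal (Φ a) * ENNReal.ofReal (2 ^ q / (1 - 2 ^ (q - r)) * a ^ q) := by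
  rw [lintegral_enorm_indicator_rpow hq
    (nullMeasurableSet_lt aemeasurable_const hF.norm.aemeasurable), div_mul_eq_mul_div]
  refine setLIntegral_norm_gt_enorm_rpow_le ha hq.le hqr fun t hat => ?_
  have ht := ha.trans_le hat
  exact meas_lt_norm_le_of_rpow_neg_mul_le hM ha ht hΦa (hΦ ha ht hat)

theorem lintegral_enorm_indicator_norm_le_rpow_le (hF : AEStronglyMeasurable F μ)
    (hM : ∀ t > 0, μ {x | t < ‖F x‖} * ENNReal.ofReal (Φ t) ≤ M)
    (hΦ : AntitoneOn (fun t : ℝ => t ^ (-r) * Φ t) (Ioi 0)) (ha : 0 < a) (hΦa : 0 < Φ a)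
    (hq : 0 < q) (hrq : r < q) :
    ∫⁻ x, ‖{x | ‖F x‖ ≤ a}.indicator F x‖ₑ ^ q ∂μ ≤
      M / ENNReal.ofReal (Φ a) * ENNReal.ofReal (2 ^ r / (1 - 2 ^ (r - q)) * a ^ q) := by
  rw [lintegral_enorm_indicator_rpow hq
    (nullMeasurableSet_le hF.norm.aemeasurable aemeasurable_const), div_mul_eq_mul_div]
  exact setLIntegral_norm_le_enorm_rpow_le ha hq hrq fun t ht hta =>
    meas_lt_norm_le_of_rpow_neg_mul_le hM ha ht hΦa (hΦ ht ha hta)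

end Distribution

theorem measure_lt_norm_le_add_of_ae_le {Y E : Type*} [MeasurableSpace Y] [NormedAddCommGroup E]
    {ν : Measure Y} {φ ψ χ : Y → E} {K s : ℝ} (hK : 0 < K)
    (h : ∀ᵐ y ∂ν, ‖φ y‖ ≤ K * (‖ψ y‖ + ‖χ y‖)) :
    ν {y | s < ‖φ y‖} ≤ ν {y | s / (2 * K) < ‖ψ y‖} + ν {y | s / (2 * K) < ‖χ y‖} := by
  refine (measure_mono_ae (h.mono fun y hy (hs : s < ‖φ y‖) => ?_)).trans (measure_union_le _ _)
  change y ∈ {y | s / (2 * K) < ‖ψ y‖} ∪ {y | s / (2 * K) < ‖χ y‖}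
  by_contra! hy'
  obtain ⟨hψ, hχ⟩ : ‖ψ y‖ ≤ s / (2 * K) ∧ ‖χ y‖ ≤ s / (2 * K) := by simpa using hy'
  have : K * (‖ψ y‖ + ‖χ y‖) ≤ s := by
    calc K * (‖ψ y‖ + ‖χ y‖) ≤ K * (s / (2 * K) + s / (2 * K)) := by gcongr
      _ = s := by field_simp; ring
  linarith

section WeakType

variable {X Y : Type*} [MeasurableSpace X] [MeasurableSpace Y] {μ : Measure X} {ν : Measure Y}
  {T : (X → ℂ) → Y → ℂ} {A : ℝ} {F : X → ℂ} {Φ : ℝ → ℝ} {M : ℝ≥0∞} {a u : ℝ}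

theorem HasWeakTypePP.meas_lt_le {p : ℝ≥0∞} (hw : HasWeakTypePP μ ν T p A) (hp0 : p ≠ 0)
    (hp : p ≠ ⊤) (hF : MemLp F p μ) (hu : 0 < u) :
    ν {y | u < ‖T F y‖} ≤ ENNReal.ofReal (A / u) ^ p.toReal * ∫⁻ x, ‖F x‖ₑ ^ p.toReal ∂μ := by
  have hq : 0 < p.toReal := ENNReal.toReal_pos hp0 hp
  have hweak := (hw F hF).2 hp u hu
  rw [eLpNorm_eq_eLpNorm' hp0 hp] at hweak
  rw [lintegral_rpow_enorm_eq_rpow_eLpNorm' hq, ← ENNReal.mul_rpow_of_nonneg _ _ hq.le,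
    ← ENNReal.rpow_inv_le_iff hq, ← one_div, ENNReal.ofReal_div_of_pos hu,
    ← ENNReal.mul_div_right_comm, ENNReal.le_div_iff_mul_le (Or.inl (by simpa using hu))
      (Or.inl ENNReal.ofReal_ne_top), mul_comm]
  exact hweak

theorem HasWeakTypePP.memLp_and_meas_lt_le_of_lintegral_le {p : ℝ≥0∞}
    (hw : HasWeakTypePP μ ν T p A) (hp0 : p ≠ 0) (hp : p ≠ ⊤) (hF : AEStronglyMeasurable F μ)
    {D : ℝ≥0∞} (hD : D ≠ ⊤) {c : ℝ} (ha : 0 < a) (hu : 0 < u)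
    (hI : ∫⁻ x, ‖F x‖ₑ ^ p.toReal ∂μ ≤ D * ENNReal.ofReal (c * a ^ p.toReal)) :
    MemLp F p μ ∧
      ν {y | u < ‖T F y‖} ≤ ENNReal.ofReal (A * a / u) ^ p.toReal * ENNReal.ofReal c * D := by
  have hq : 0 < p.toReal := ENNReal.toReal_pos hp0 hp
  have hF' : MemLp F p μ := ⟨hF, (eLpNorm_lt_top_iff_lintegral_rpow_enorm_lt_top hp0 hp).2
    (hI.trans_lt (by finiteness))⟩
  refine ⟨hF', (hw.meas_lt_le hp0 hp hF' hu).trans ?_⟩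
  calc ENNReal.ofReal (A / u) ^ p.toReal * ∫⁻ x, ‖F x‖ₑ ^ p.toReal ∂μ
      ≤ ENNReal.ofReal (A / u) ^ p.toReal * (D * ENNReal.ofReal (c * a ^ p.toReal)) := by gcongr
    _ = ENNReal.ofReal (A * a / u) ^ p.toReal * ENNReal.ofReal c * D := by
      rw [ENNReal.ofReal_mul' (by positivity), ← ENNReal.ofReal_rpow_of_pos ha, mul_div_right_comm,
        ENNReal.ofReal_mul' ha.le, ENNReal.mul_rpow_of_nonneg _ _ hq.le]
      ring

theorem HasWeakTypePP.memLp_top_and_meas_lt_eq_zero (hw : HasWeakTypePP μ ν T ⊤ A)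
    (hA : 0 ≤ A) (hF : AEStronglyMeasurable F μ) (ha : 0 ≤ a) (hFa : ∀ x, ‖F x‖ ≤ a)
    (hu : A * a ≤ u) :
    MemLp F ⊤ μ ∧ ν {y | u < ‖T F y‖} = 0 := by
  have hF' : MemLp F ⊤ μ := memLp_top_of_bound hF a (ae_of_all _ hFa)
  refine ⟨hF', measure_mono_null (fun y (hy : u < ‖T F y‖) => ?_)
    (meas_eLpNormEssSup_lt (f := T F))⟩
  calc eLpNormEssSup (T F) ν ≤ ENNReal.ofReal A * eLpNorm F ⊤ μ := (hw F hF').1 rfl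
    _ ≤ ENNReal.ofReal A * ENNReal.ofReal a := by
        gcongr
        rw [eLpNorm_exponent_top]
        exact eLpNormEssSup_le_of_ae_bound (ae_of_all _ hFa)
    _ = ENNReal.ofReal (A * a) := (ENNReal.ofReal_mul hA).symm
    _ < ‖T F y‖ₑ := by
        have hy' := hu.trans_lt hy
        rw [← ofReal_norm]
        exact ENNReal.ofReal_lt_ofReal_iff'.2 ⟨hy', (mul_nonneg hA ha).trans_lt hy'⟩

theorem HasWeakTypePP.memLp_indicator_norm_gt_and_meas_lt_le {p : ℝ≥0∞} {r : ℝ}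
    (hw : HasWeakTypePP μ ν T p A) (hp : 0 < p) (hpr : p < ENNReal.ofReal r)
    (hF : AEStronglyMeasurable F μ)
    (hM : ∀ t > 0, μ {x | t < ‖F x‖} * ENNReal.ofReal (Φ t) ≤ M) (hM_top : M ≠ ⊤)
    (hΦ : MonotoneOn (fun t : ℝ => t ^ (-r) * Φ t) (Ioi 0)) (ha : 0 < a) (hΦa : 0 < Φ a)
    (hu : 0 < u) :
    MemLp ({x | a < ‖F x‖}.indicator F) p μ ∧
      ν {y | u < ‖T ({x | a < ‖F x‖}.indicator F) y‖} ≤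
        ENNReal.ofReal (A * a / u) ^ p.toReal *
          ENNReal.ofReal (2 ^ p.toReal / (1 - 2 ^ (p.toReal - r))) * (M / ENNReal.ofReal (Φ a)) :=
  have hp_top : p ≠ ⊤ := ne_top_of_lt hpr
  hw.memLp_and_meas_lt_le_of_lintegral_le hp.ne' hp_top
    (hF.indicator₀ (nullMeasurableSet_lt aemeasurable_const hF.norm.aemeasurable))
    (ENNReal.div_ne_top hM_top (ENNReal.ofReal_pos.2 hΦa).ne') ha hu
    (lintegral_enorm_indicator_norm_gt_rpow_le hF hM hΦ ha hΦa (ENNReal.toReal_pos hp.ne' hp_top)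
      (ENNReal.toReal_lt_of_lt_ofReal hpr))

theorem HasWeakTypePP.memLp_indicator_norm_le_and_meas_lt_le {p : ℝ≥0∞} {r : ℝ}
    (hw : HasWeakTypePP μ ν T p A) (hA : 0 ≤ A) (hrp : ENNReal.ofReal r < p)
    (hF : AEStronglyMeasurable F μ)
    (hM : ∀ t > 0, μ {x | t < ‖F x‖} * ENNReal.ofReal (Φ t) ≤ M) (hM_top : M ≠ ⊤)
    (hΦ : AntitoneOn (fun t : ℝ => t ^ (-r) * Φ t) (Ioi 0)) (ha : 0 < a) (hΦa : 0 < Φ a)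
    (hu : 0 < u) (hAa : A * a ≤ u) :
    MemLp ({x | ‖F x‖ ≤ a}.indicator F) p μ ∧
      ν {y | u < ‖T ({x | ‖F x‖ ≤ a}.indicator F) y‖} ≤
        ENNReal.ofReal (A * a / u) ^ p.toReal *
          ENNReal.ofReal (2 ^ r / (1 - 2 ^ (r - p.toReal))) * (M / ENNReal.ofReal (Φ a)) := by
  have hFa : AEStronglyMeasurable ({x | ‖F x‖ ≤ a}.indicator F) μ :=
    hF.indicator₀ (nullMeasurableSet_le hF.norm.aemeasurable aemeasurable_const)
  rcases eq_or_ne p ⊤ with rfl | hp_top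
  · obtain ⟨hF', hν⟩ := hw.memLp_top_and_meas_lt_eq_zero hA hFa ha.le
      (fun x => by by_cases hx : ‖F x‖ ≤ a <;> simp [hx, ha.le]) hAa
    exact ⟨hF', hν.trans_le zero_le⟩
  have hp : p ≠ 0 := ne_bot_of_gt hrp
  have hrp' : r < p.toReal := (le_max_left r 0).trans_lt <| by
    rw [← ENNReal.toReal_ofReal']; exact ENNReal.toReal_strict_mono hp_top hrp
  exact hw.memLp_and_meas_lt_le_of_lintegral_le hp hp_top hFa
    (ENNReal.div_ne_top hM_top (ENNReal.ofReal_pos.2 hΦa).ne') ha hu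
    (lintegral_enorm_indicator_norm_le_rpow_le hF hM hΦ ha hΦa (ENNReal.toReal_pos hp hp_top) hrp')

end WeakType

theorem meas_lt_norm_mul_le_of_cut
    {X Y : Type*} [MeasurableSpace X] [MeasurableSpace Y] {μ : Measure X} {ν : Measure Y}
    {p₀ p₁ : ℝ≥0∞} {T : (X → ℂ) → Y → ℂ} {K A₀ A₁ r₀ r₁ : ℝ} (hp₀ : 0 < p₀) (hK : 0 < K)
    (hA₁ : 0 ≤ A₁)
    (hquasi : ∀ f g : X → ℂ,
      (∃ g' h', f = g' + h' ∧ MemLp g' p₀ μ ∧ MemLp h' p₁ μ) →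
      (∃ g' h', g = g' + h' ∧ MemLp g' p₀ μ ∧ MemLp h' p₁ μ) →
      ∀ᵐ y ∂ν, ‖T (f + g) y‖ ≤ K * (‖T f y‖ + ‖T g y‖))
    (hw₀ : HasWeakTypePP μ ν T p₀ A₀) (hw₁ : HasWeakTypePP μ ν T p₁ A₁)
    (hr₀ : p₀ < ENNReal.ofReal r₀) (hr₁ : ENNReal.ofReal r₁ < p₁) {Φ : ℝ → ℝ}
    (hΦ : ∀ t > 0, 0 < Φ t) (hmono : MonotoneOn (fun t : ℝ => t ^ (-r₀) * Φ t) (Ioi 0))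
    (hanti : AntitoneOn (fun t : ℝ => t ^ (-r₁) * Φ t) (Ioi 0)) {f : X → ℂ}
    (hf : AEStronglyMeasurable f μ) {M : ℝ≥0∞}
    (hM : ∀ t > 0, μ {x | t < ‖f x‖} * ENNReal.ofReal (Φ t) ≤ M) (hM_top : M ≠ ⊤)
    {s a : ℝ} (ha : 0 < a) (has : a ≤ s) (hA₁a : A₁ * a ≤ s / (2 * K)) :
    ν {y | s < ‖T f y‖} * ENNReal.ofReal (Φ s) ≤
      (ENNReal.ofReal (A₀ * a / (s / (2 * K))) ^ p₀.toReal *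
          ENNReal.ofReal (2 ^ p₀.toReal / (1 - 2 ^ (p₀.toReal - r₀))) +
        ENNReal.ofReal (A₁ * a / (s / (2 * K))) ^ p₁.toReal *
          ENNReal.ofReal (2 ^ r₁ / (1 - 2 ^ (r₁ - p₁.toReal)))) *
        ENNReal.ofReal ((s / a) ^ r₁) * M := by
  have hs := ha.trans_le has
  have hu : 0 < s / (2 * K) := by positivity
  have hΦs : ENNReal.ofReal (Φ s) ≤ ENNReal.ofReal ((s / a) ^ r₁) * ENNReal.ofReal (Φ a) := by
    rw [← ENNReal.ofReal_mul (by positivity)]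
    exact ENNReal.ofReal_le_ofReal (le_div_rpow_mul_of_rpow_neg_mul_le ha hs (hanti ha hs has))
  have hgh : {x | a < ‖f x‖}.indicator f + {x | ‖f x‖ ≤ a}.indicator f = f := by
    rw [show {x | ‖f x‖ ≤ a} = {x | a < ‖f x‖}ᶜ by ext; simp]
    exact indicator_self_add_compl _ _
  set g := {x | a < ‖f x‖}.indicator f
  set h := {x | ‖f x‖ ≤ a}.indicator f
  obtain ⟨hg, hνg⟩ := hw₀.memLp_indicator_norm_gt_and_meas_lt_le hp₀ hr₀ hf hM hM_top hmono ha
    (hΦ a ha) hu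
  obtain ⟨hh, hνh⟩ := hw₁.memLp_indicator_norm_le_and_meas_lt_le hA₁ hr₁ hf hM hM_top hanti ha
    (hΦ a ha) hu hA₁a
  have hquasi_gh := hquasi g h ⟨g, 0, (add_zero g).symm, hg, MemLp.zero⟩
    ⟨0, h, (zero_add h).symm, MemLp.zero, hh⟩
  rw [hgh] at hquasi_gh
  set D := M / ENNReal.ofReal (Φ a)
  have hDM : D * ENNReal.ofReal (Φ a) = M :=
    ENNReal.div_mul_cancel (ENNReal.ofReal_pos.2 (hΦ a ha)).ne' ENNReal.ofReal_ne_top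
  calc ν {y | s < ‖T f y‖} * ENNReal.ofReal (Φ s)
      ≤ (ν {y | s / (2 * K) < ‖T g y‖} + ν {y | s / (2 * K) < ‖T h y‖}) *
          (ENNReal.ofReal ((s / a) ^ r₁) * ENNReal.ofReal (Φ a)) :=
        mul_le_mul' (measure_lt_norm_le_add_of_ae_le hK hquasi_gh) hΦs
    _ ≤ _ := mul_le_mul' (add_le_add hνg hνh) le_rfl
    _ = _ := by rw [← hDM]; ring

noncomputable def weakOrliczInterpolationConst (K A₀ A₁ : ℝ) (p₀ p₁ : ℝ≥0∞) (r₀ r₁ : ℝ) :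
    ℝ≥0∞ :=
  (ENNReal.ofReal (A₀ / (A₁ + 1)) ^ p₀.toReal *
      ENNReal.ofReal (2 ^ p₀.toReal / (1 - 2 ^ (p₀.toReal - r₀))) +
    ENNReal.ofReal (A₁ / (A₁ + 1)) ^ p₁.toReal *
      ENNReal.ofReal (2 ^ r₁ / (1 - 2 ^ (r₁ - p₁.toReal)))) *
  ENNReal.ofReal ((2 * K * (A₁ + 1)) ^ r₁)

theorem weakOrliczInterpolationConst_ne_top (K A₀ A₁ : ℝ) (p₀ p₁ : ℝ≥0∞) (r₀ r₁ : ℝ) :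
    weakOrliczInterpolationConst K A₀ A₁ p₀ p₁ r₀ r₁ ≠ ⊤ := by
  unfold weakOrliczInterpolationConst
  have := ENNReal.toReal_nonneg (a := p₀)
  have := ENNReal.toReal_nonneg (a := p₁)
  finiteness

theorem meas_lt_norm_mul_le_weakOrliczInterpolationConst_mul
    {X Y : Type*} [MeasurableSpace X] [MeasurableSpace Y] {μ : Measure X} {ν : Measure Y}
    {p₀ p₁ : ℝ≥0∞} {T : (X → ℂ) → Y → ℂ} {K A₀ A₁ r₀ r₁ : ℝ} (hp₀ : 0 < p₀) (hK : 1 ≤ K)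
    (hA₁ : 0 < A₁)
    (hquasi : ∀ f g : X → ℂ,
      (∃ g' h', f = g' + h' ∧ MemLp g' p₀ μ ∧ MemLp h' p₁ μ) →
      (∃ g' h', g = g' + h' ∧ MemLp g' p₀ μ ∧ MemLp h' p₁ μ) →
      ∀ᵐ y ∂ν, ‖T (f + g) y‖ ≤ K * (‖T f y‖ + ‖T g y‖))
    (hw₀ : HasWeakTypePP μ ν T p₀ A₀) (hw₁ : HasWeakTypePP μ ν T p₁ A₁)
    (hr₀ : p₀ < ENNReal.ofReal r₀) (hr₁ : ENNReal.ofReal r₁ < p₁) {Φ : ℝ → ℝ}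
    (hΦ : ∀ t > 0, 0 < Φ t) (hmono : MonotoneOn (fun t : ℝ => t ^ (-r₀) * Φ t) (Ioi 0))
    (hanti : AntitoneOn (fun t : ℝ => t ^ (-r₁) * Φ t) (Ioi 0)) {f : X → ℂ}
    (hf : AEStronglyMeasurable f μ) {M : ℝ≥0∞}
    (hM : ∀ t > 0, μ {x | t < ‖f x‖} * ENNReal.ofReal (Φ t) ≤ M) (hM_top : M ≠ ⊤)
    {s : ℝ} (hs : 0 < s) :
    ν {y | s < ‖T f y‖} * ENNReal.ofReal (Φ s) ≤
      weakOrliczInterpolationConst K A₀ A₁ p₀ p₁ r₀ r₁ * M := by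
  have hK₀ : 0 < K := by linarith
  set a := s / (2 * K * (A₁ + 1)) with ha_def
  have ha : 0 < a := by positivity
  have hsa : s / a = 2 * K * (A₁ + 1) := by rw [ha_def]; field_simp
  have hAa (A : ℝ) : A * a / (s / (2 * K)) = A / (A₁ + 1) := by rw [ha_def]; field_simp
  have has : a ≤ s := div_le_self hs.le (by nlinarith)
  have hA₁a : A₁ * a ≤ s / (2 * K) := by
    rw [← div_le_one (by positivity), hAa, div_le_one (by positivity)]; linarith
  refine (meas_lt_norm_mul_le_of_cut hp₀ hK₀ hA₁.le hquasi hw₀ hw₁ hr₀ hr₁ hΦ hmono hanti hf hM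
    hM_top ha has hA₁a).trans_eq ?_
  rw [hsa, hAa, hAa, weakOrliczInterpolationConst]

theorem marcinkiewicz_interpolation_weak_orlicz_general
    {X Y : Type*} [MeasurableSpace X] [MeasurableSpace Y]
    (μ : Measure X) (ν : Measure Y)
    (p₀ p₁ : ℝ≥0∞) (hp₀ : 0 < p₀)
    (T : (X → ℂ) → Y → ℂ) (K : ℝ) (hK : 1 ≤ K) (A₀ A₁ : ℝ) (hA₁ : 0 < A₁)
    (hquasi : ∀ f g : X → ℂ,
      (∃ g' h', f = g' + h' ∧ MemLp g' p₀ μ ∧ MemLp h' p₁ μ) →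
      (∃ g' h', g = g' + h' ∧ MemLp g' p₀ μ ∧ MemLp h' p₁ μ) →
      ∀ᵐ y ∂ν, ‖T (f + g) y‖ ≤ K * (‖T f y‖ + ‖T g y‖))
    (hw₀ : HasWeakTypePP μ ν T p₀ A₀) (hw₁ : HasWeakTypePP μ ν T p₁ A₁)
    (r₀ r₁ : ℝ) (hr₀ : p₀ < ENNReal.ofReal r₀)
    (hr₁ : ENNReal.ofReal r₁ < p₁) :
    ∃ C > 0, ∀ Φ : ℝ → ℝ, IsOrliczFunction Φ →
      MonotoneOn (fun t : ℝ => t ^ (-r₀) * Φ t) (Ioi 0) →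
      AntitoneOn (fun t : ℝ => t ^ (-r₁) * Φ t) (Ioi 0) →
      ∀ f : X → ℂ, (∃ g h, f = g + h ∧ MemLp g p₀ μ ∧ MemLp h p₁ μ) →
        (⨆ s ∈ Ioi (0 : ℝ), ν {y | s < ‖T f y‖} * ENNReal.ofReal (Φ s)) ≤
          ENNReal.ofReal C *
            ⨆ s ∈ Ioi (0 : ℝ), μ {x | s < ‖f x‖} * ENNReal.ofReal (Φ s) := by
  set C := weakOrliczInterpolationConst K A₀ A₁ p₀ p₁ r₀ r₁
  have hC : C ≤ ENNReal.ofReal (C.toReal + 1) := by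
    rw [ENNReal.le_ofReal_iff_toReal_le (weakOrliczInterpolationConst_ne_top _ _ _ _ _ _ _)
      (by positivity)]
    linarith
  refine ⟨C.toReal + 1, by positivity, fun Φ hΦ hmono hanti f hf => ?_⟩
  obtain ⟨-, -, -, -, hΦ_pos, -⟩ := hΦ
  have hf_meas : AEStronglyMeasurable f μ := by
    obtain ⟨g, h, rfl, hg, hh⟩ := hf
    exact hg.1.add hh.1
  set M := ⨆ s ∈ Ioi (0 : ℝ), μ {x | s < ‖f x‖} * ENNReal.ofReal (Φ s)
  rcases eq_or_ne M ⊤ with hM_top | hM_top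
  · rw [hM_top, ENNReal.mul_top (by positivity)]
    exact le_top
  refine iSup₂_le fun s hs => (meas_lt_norm_mul_le_weakOrliczInterpolationConst_mul hp₀ hK hA₁
    hquasi hw₀ hw₁ hr₀ hr₁ hΦ_pos hmono hanti hf_meas (fun t ht => ?_) hM_top hs).trans (by gcongr)
  exact le_iSup₂ (f := fun s (_ : s ∈ Ioi (0 : ℝ)) => μ {x | s < ‖f x‖} * ENNReal.ofReal (Φ s)) t ht

/-- Marcinkiewicz-type interpolation for weak Orlicz spaces: a quasilinear operator which is
simultaneously of weak type `(p₀,p₀)` and `(p₁,p₁)` maps the weak `Φ`-moment boundedly,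
whenever `p₀ < a_Φ ≤ b_Φ < p₁` (expressed via exponents `r₀ ≤ r₁`). The constant depends only
on `K, A₀, A₁, p₀, p₁, r₀, r₁`. -/
theorem marcinkiewicz_interpolation_weak_orlicz
    {X Y : Type*} [MeasurableSpace X] [MeasurableSpace Y]
    (μ : Measure X) (ν : Measure Y) [SigmaFinite μ] [SigmaFinite ν]
    (p₀ p₁ : ℝ≥0∞) (hp₀ : 0 < p₀) (hp₀p₁ : p₀ < p₁)
    (T : (X → ℂ) → Y → ℂ) (K : ℝ) (hK : 1 ≤ K) (A₀ A₁ : ℝ) (hA₀ : 0 < A₀) (hA₁ : 0 < A₁)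
    (hhom : ∀ (α : ℂ) (f : X → ℂ), (∃ g h, f = g + h ∧ MemLp g p₀ μ ∧ MemLp h p₁ μ) →
      ∀ᵐ y ∂ν, ‖T (fun x => α * f x) y‖ ≤ ‖α‖ * ‖T f y‖)
    (hquasi : ∀ f g : X → ℂ,
      (∃ g' h', f = g' + h' ∧ MemLp g' p₀ μ ∧ MemLp h' p₁ μ) →
      (∃ g' h', g = g' + h' ∧ MemLp g' p₀ μ ∧ MemLp h' p₁ μ) →
      ∀ᵐ y ∂ν, ‖T (f + g) y‖ ≤ K * (‖T f y‖ + ‖T g y‖))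
    (hw₀ : HasWeakTypePP μ ν T p₀ A₀) (hw₁ : HasWeakTypePP μ ν T p₁ A₁)
    (r₀ r₁ : ℝ) (hr₀ : p₀ < ENNReal.ofReal r₀) (hr₀r₁ : r₀ ≤ r₁)
    (hr₁ : ENNReal.ofReal r₁ < p₁) :
    ∃ C > 0, ∀ Φ : ℝ → ℝ, IsOrliczFunction Φ →
      MonotoneOn (fun t : ℝ => t ^ (-r₀) * Φ t) (Ioi 0) →
      AntitoneOn (fun t : ℝ => t ^ (-r₁) * Φ t) (Ioi 0) →
      ∀ f : X → ℂ, (∃ g h, f = g + h ∧ MemLp g p₀ μ ∧ MemLp h p₁ μ) →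
        (⨆ s ∈ Ioi (0 : ℝ), ν {y | s < ‖T f y‖} * ENNReal.ofReal (Φ s)) ≤
          ENNReal.ofReal C *
            ⨆ s ∈ Ioi (0 : ℝ), μ {x | s < ‖f x‖} * ENNReal.ofReal (Φ s) :=
  marcinkiewicz_interpolation_weak_orlicz_general μ ν p₀ p₁ hp₀ T K hK A₀ A₁ hA₁ hquasi hw₀ hw₁ r₀
    r₁ hr₀ hr₁
end

section
/- Renorming of weak Orlicz spaces (commutative case of Corollary 4.4): Let (X, μ) be a σ-finite measure space and Φ an Orlicz function for which there exist 1 < p ≤ q < ∞ such that t ↦ t^{−p}Φ(t) is nondecreasing on (0,∞) and t ↦ t^{−q}Φ(t) is nonincreasing on (0,∞) (this expresses 1 < a_Φ ≤ b_Φ < ∞). For a measurable f : X → ℂ with ‖f‖_{L^w_Φ} < ∞, set f**(t) = (1/t)·∫₀^t f*(s) ds for t > 0, where f* is the decreasing rearrangement of f. Then there exists a constant C > 0 depending only on Φ, p, q such that ‖f‖_{L^w_Φ} ≤ inf{c > 0 : t·Φ(f**(t)/c) ≤ 1 for all t > 0} ≤ C·‖f‖_{L^w_Φ}. In particular the functional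 f ↦ inf{c > 0 : t·Φ(f**(t)/c) ≤ 1 for all t > 0} is equivalent to ‖·‖_{L^w_Φ}. -/
open Set Filter MeasureTheory
open scoped ENNReal

/-- The decreasing rearrangement `f*(t) = inf {s > 0 : λ_f(s) ≤ t}` with `inf ∅ = +∞`,
a value in `[0,∞]`. -/
noncomputable def rearrangement {X : Type*} [MeasurableSpace X] (μ : Measure X) (f : X → ℂ)
    (t : ℝ) : ℝ≥0∞ :=
  sInf (ENNReal.ofReal '' {s : ℝ | 0 < s ∧ distrib μ f s ≤ ENNReal.ofReal t})

/-- `f**(t) = (1/t) ∫₀ᵗ f*(s) ds`, a value in `[0,∞]`. -/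
noncomputable def doubleStar {X : Type*} [MeasurableSpace X] (μ : Measure X) (f : X → ℂ)
    (t : ℝ) : ℝ≥0∞ :=
  (ENNReal.ofReal t)⁻¹ * ∫⁻ s in Ioc (0 : ℝ) t, rearrangement μ f s

/-- The extension of an Orlicz function to `[0,∞]` with `Φ(∞) = ∞`. -/
noncomputable def PhiE (Φ : ℝ → ℝ) (x : ℝ≥0∞) : ℝ≥0∞ :=
  if x = ⊤ then ⊤ else ENNReal.ofReal (Φ x.toReal)

open Topology

/-!
If `c` is admissible for the weak Orlicz condition, then `f*(t) ≤ c Φ⁻¹(1/t)`. Monotonicity of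
`t ↦ t^{-p} Φ(t)` gives `Φ⁻¹(1/u) ≤ (t/u)^{1/p} Φ⁻¹(1/t)` for `u ≤ t`, and since `p > 1` the average
of `(t/u)^{1/p}` over `u ∈ (0, t]` is `p/(p-1)`; hence `f**(t) ≤ p/(p-1) · c Φ⁻¹(1/t)`, so
`p/(p-1) · c` is admissible for `f**`. Conversely, `f* ≥ s` on `(0, t]` whenever `t < λ_f(s)`, hence
`f**(t) ≥ s` there, and a constant admissible for `f**` is admissible for `λ_f`.
-/

lemma ENNReal.mul_le_one_of_forall_lt {a b : ℝ≥0∞}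
    (h : ∀ r : NNReal, 0 < r → (r : ℝ≥0∞) < a → r * b ≤ 1) : a * b ≤ 1 :=
  ENNReal.le_inv_iff_mul_le.1 <| ENNReal.le_of_forall_pos_nnreal_lt fun r hr hra =>
    ENNReal.le_inv_iff_mul_le.2 (h r hr hra)

lemma sInf_ofReal_image_le_mul {A B : Set ℝ} {K : ℝ} (hK : 0 < K)
    (hAB : ∀ c ∈ A, K * c ∈ B) :
    sInf (ENNReal.ofReal '' B) ≤ ENNReal.ofReal K * sInf (ENNReal.ofReal '' A) := by
  rw [mul_comm, ← ENNReal.div_le_iff (by simpa using hK) ENNReal.ofReal_ne_top]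
  refine le_sInf ?_
  rintro _ ⟨c, hc, rfl⟩
  rw [ENNReal.div_le_iff (by simpa using hK) ENNReal.ofReal_ne_top, mul_comm,
    ← ENNReal.ofReal_mul hK.le]
  exact sInf_le ⟨K * c, hAB c hc, rfl⟩

-- Junk (`sSup` of an unbounded set) unless `Φ → ∞`.
noncomputable def invPhi (Φ : ℝ → ℝ) (y : ℝ) : ℝ := sSup {s | 0 ≤ s ∧ Φ s ≤ y}

section invPhi

variable {Φ : ℝ → ℝ} {y s : ℝ}

lemma invPhi_bddAbove (htop : Tendsto Φ atTop atTop) (y : ℝ) :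
    BddAbove {s | 0 ≤ s ∧ Φ s ≤ y} := by
  obtain ⟨T, hT⟩ := eventually_atTop.1 (htop.eventually_gt_atTop y)
  exact ⟨T, fun s hs => le_of_not_ge fun hTs => (hT s hTs).not_ge hs.2⟩

lemma le_invPhi (htop : Tendsto Φ atTop atTop) (hs : 0 ≤ s) (hΦs : Φ s ≤ y) :
    s ≤ invPhi Φ y :=
  le_csSup (invPhi_bddAbove htop y) ⟨hs, hΦs⟩

lemma invPhi_nonneg (h0 : Φ 0 = 0) (htop : Tendsto Φ atTop atTop) (hy : 0 ≤ y) :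
    0 ≤ invPhi Φ y :=
  le_invPhi htop le_rfl (h0.trans_le hy)

lemma lt_apply_of_invPhi_lt (h0 : Φ 0 = 0) (htop : Tendsto Φ atTop atTop) (hy : 0 ≤ y)
    (hs : invPhi Φ y < s) : y < Φ s :=
  lt_of_not_ge fun hΦs =>
    hs.not_ge (le_invPhi htop ((invPhi_nonneg h0 htop hy).trans hs.le) hΦs)

lemma apply_invPhi_le (hcont : ContinuousOn Φ (Ici 0)) (h0 : Φ 0 = 0)
    (htop : Tendsto Φ atTop atTop) (hy : 0 ≤ y) : Φ (invPhi Φ y) ≤ y := by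
  have hclosed : IsClosed {s | 0 ≤ s ∧ Φ s ≤ y} :=
    hcont.preimage_isClosed_of_isClosed isClosed_Ici isClosed_Iic
  exact (hclosed.csSup_mem ⟨0, le_rfl, h0.trans_le hy⟩ (invPhi_bddAbove htop y)).2

lemma apply_mul_le_rpow_mul {p l b : ℝ}
    (hmono : MonotoneOn (fun t : ℝ => t ^ (-p) * Φ t) (Ioi 0))
    (hl0 : 0 < l) (hl1 : l ≤ 1) (hb : 0 < b) : Φ (l * b) ≤ l ^ p * Φ b := by
  have hlb : 0 < l * b := mul_pos hl0 hb
  have h := hmono hlb hb (mul_le_of_le_one_left hb.le hl1)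
  simp only [Real.rpow_neg hlb.le, Real.rpow_neg hb.le, Real.mul_rpow hl0.le hb.le] at h
  rw [inv_mul_le_iff₀ (by positivity)] at h
  calc Φ (l * b) ≤ l ^ p * b ^ p * ((b ^ p)⁻¹ * Φ b) := h
    _ = l ^ p * Φ b := by field_simp

lemma rpow_mul_invPhi_le {p l : ℝ} (hcont : ContinuousOn Φ (Ici 0)) (h0 : Φ 0 = 0)
    (htop : Tendsto Φ atTop atTop) (hp : 0 < p)
    (hmono : MonotoneOn (fun t : ℝ => t ^ (-p) * Φ t) (Ioi 0))
    (hl0 : 0 < l) (hl1 : l ≤ 1) (hy : 0 ≤ y) :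
    l ^ (1 / p) * invPhi Φ y ≤ invPhi Φ (l * y) := by
  rcases (invPhi_nonneg h0 htop hy).eq_or_lt with hb | hb
  · rw [← hb, mul_zero]
    exact invPhi_nonneg h0 htop (mul_nonneg hl0.le hy)
  refine le_invPhi htop (by positivity) ?_
  calc Φ (l ^ (1 / p) * invPhi Φ y)
      ≤ (l ^ (1 / p)) ^ p * Φ (invPhi Φ y) :=
        apply_mul_le_rpow_mul hmono (by positivity) (Real.rpow_le_one hl0.le hl1 (by positivity)) hb
    _ ≤ l * y := by
        rw [← Real.rpow_mul hl0.le, one_div_mul_cancel hp.ne', Real.rpow_one]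
        exact mul_le_mul_of_nonneg_left (apply_invPhi_le hcont h0 htop hy) hl0.le

end invPhi

section PhiE

variable {Φ : ℝ → ℝ}

lemma PhiE_ofReal {x : ℝ} (hx : 0 ≤ x) : PhiE Φ (ENNReal.ofReal x) = ENNReal.ofReal (Φ x) := by
  rw [PhiE, if_neg ENNReal.ofReal_ne_top, ENNReal.toReal_ofReal hx]

lemma PhiE_mono (hm : MonotoneOn Φ (Ici 0)) : Monotone (PhiE Φ) := by
  intro x y hxy
  rcases eq_or_ne y ⊤ with rfl | hy
  · simp [PhiE]
  rw [PhiE, PhiE, if_neg (ne_top_of_le_ne_top hy hxy), if_neg hy]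
  exact ENNReal.ofReal_le_ofReal
    (hm ENNReal.toReal_nonneg ENNReal.toReal_nonneg (ENNReal.toReal_mono hy hxy))

end PhiE

section Rearrangement

variable {X : Type*} [MeasurableSpace X] {μ : Measure X} {f : X → ℂ} {Φ : ℝ → ℝ}

lemma le_rearrangement_of_lt_distrib {s u : ℝ} (hu : ENNReal.ofReal u < distrib μ f s) :
    ENNReal.ofReal s ≤ rearrangement μ f u := by
  refine le_sInf ?_
  rintro _ ⟨s', ⟨-, hs'⟩, rfl⟩
  refine ENNReal.ofReal_le_ofReal (le_of_not_gt fun hs's => hu.not_ge ?_)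
  exact (measure_mono fun x hx => hs's.trans hx).trans hs'

lemma le_doubleStar_of_lt_distrib {s t : ℝ} (ht : 0 < t) (hst : ENNReal.ofReal t < distrib μ f s) :
    ENNReal.ofReal s ≤ doubleStar μ f t := by
  have hint : ENNReal.ofReal t * ENNReal.ofReal s ≤ ∫⁻ u in Ioc (0 : ℝ) t, rearrangement μ f u :=
    calc ENNReal.ofReal t * ENNReal.ofReal s = ∫⁻ _ in Ioc (0 : ℝ) t, ENNReal.ofReal s := by
          rw [setLIntegral_const, Real.volume_Ioc, sub_zero, mul_comm]
      _ ≤ _ := setLIntegral_mono_ae' measurableSet_Ioc <| ae_of_all _ fun u hu =>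
          le_rearrangement_of_lt_distrib <| (ENNReal.ofReal_le_ofReal hu.2).trans_lt hst
  rw [doubleStar, ← ENNReal.div_eq_inv_mul]
  exact ENNReal.le_div_iff_mul_le (.inl (by simpa using ht)) (.inl ENNReal.ofReal_ne_top)
    |>.2 (mul_comm (ENNReal.ofReal s) _ ▸ hint)

lemma rearrangement_le_mul_invPhi (h0 : Φ 0 = 0) (htop : Tendsto Φ atTop atTop) {c t : ℝ}
    (hc : 0 < c) (hadm : ∀ s > 0, distrib μ f s * ENNReal.ofReal (Φ (s / c)) ≤ 1)
    (ht : 0 < t) : rearrangement μ f t ≤ ENNReal.ofReal (c * invPhi Φ (1 / t)) := by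
  have hI := invPhi_nonneg h0 htop (one_div_pos.2 ht).le
  have hlim : Tendsto (fun s => ENNReal.ofReal (c * s)) (𝓝[>] invPhi Φ (1 / t))
      (𝓝 (ENNReal.ofReal (c * invPhi Φ (1 / t)))) :=
    ((ENNReal.continuous_ofReal.comp (continuous_const_mul c)).tendsto _).mono_left
      nhdsWithin_le_nhds
  refine ge_of_tendsto hlim (eventually_nhdsWithin_of_forall fun s hs => ?_)
  have hs0 : 0 < s := hI.trans_lt hs
  have hΦs : t⁻¹ < Φ s := one_div t ▸ lt_apply_of_invPhi_lt h0 htop (one_div_pos.2 ht).le hs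
  refine sInf_le ⟨c * s, ⟨mul_pos hc hs0, ?_⟩, rfl⟩
  have h := hadm (c * s) (mul_pos hc hs0)
  rw [mul_div_cancel_left₀ _ hc.ne'] at h
  calc distrib μ f (c * s) ≤ (ENNReal.ofReal (Φ s))⁻¹ := ENNReal.le_inv_iff_mul_le.2 h
    _ ≤ ENNReal.ofReal t := by
        rw [← ENNReal.ofReal_inv_of_pos ((inv_pos.2 ht).trans hΦs)]
        exact ENNReal.ofReal_le_ofReal (inv_le_of_inv_le₀ ht hΦs.le)

lemma setLIntegral_Ioc_rpow_neg {r t : ℝ} (hr : r < 1) (ht : 0 ≤ t) :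
    ∫⁻ u in Ioc (0 : ℝ) t, ENNReal.ofReal (u ^ (-r)) =
      ENNReal.ofReal (t ^ (1 - r) / (1 - r)) := by
  have hr' : -1 < -r := by linarith
  have hint : IntegrableOn (fun u : ℝ => u ^ (-r)) (Ioc 0 t) := by
    have h := intervalIntegral.intervalIntegrable_rpow' hr' (a := 0) (b := t)
    rwa [intervalIntegrable_iff, uIoc_of_le ht] at h
  rw [← ofReal_integral_eq_lintegral_ofReal hint
      (ae_restrict_of_forall_mem measurableSet_Ioc fun u hu => Real.rpow_nonneg hu.1.le _),
    ← intervalIntegral.integral_of_le ht, integral_rpow (.inl hr'),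
    Real.zero_rpow (by linarith), sub_zero, neg_add_eq_sub]

lemma doubleStar_le_mul_invPhi (hcont : ContinuousOn Φ (Ici 0)) (h0 : Φ 0 = 0)
    (htop : Tendsto Φ atTop atTop) {p c t : ℝ} (hp : 1 < p)
    (hmono : MonotoneOn (fun t : ℝ => t ^ (-p) * Φ t) (Ioi 0)) (hc : 0 < c)
    (hadm : ∀ s > 0, distrib μ f s * ENNReal.ofReal (Φ (s / c)) ≤ 1) (ht : 0 < t) :
    doubleStar μ f t ≤ ENNReal.ofReal (p / (p - 1) * c * invPhi Φ (1 / t)) := by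
  have hI := invPhi_nonneg h0 htop (one_div_pos.2 ht).le
  set B := c * invPhi Φ (1 / t) * t ^ (1 / p)
  have hB : 0 ≤ B := by positivity
  have hpoint : ∀ u ∈ Ioc (0 : ℝ) t,
      rearrangement μ f u ≤ ENNReal.ofReal B * ENNReal.ofReal (u ^ (-(1 / p))) := by
    rintro u ⟨hu, hut⟩
    rw [← ENNReal.ofReal_mul hB]
    refine (rearrangement_le_mul_invPhi h0 htop hc hadm hu).trans (ENNReal.ofReal_le_ofReal ?_)
    have hscale := rpow_mul_invPhi_le hcont h0 htop (by linarith) hmono (div_pos hu ht)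
      ((div_le_one ht).2 hut) (one_div_pos.2 hu).le
    rw [show u / t * (1 / u) = 1 / t by field_simp] at hscale
    have hcancel : (u / t) ^ (1 / p) * (t ^ (1 / p) * u ^ (-(1 / p))) = 1 := by
      rw [Real.div_rpow hu.le ht.le, Real.rpow_neg hu.le]
      field_simp
    calc c * invPhi Φ (1 / u)
        = c * ((u / t) ^ (1 / p) * invPhi Φ (1 / u)) * (t ^ (1 / p) * u ^ (-(1 / p))) := by
          linear_combination (-(c * invPhi Φ (1 / u))) * hcancel
      _ ≤ c * invPhi Φ (1 / t) * (t ^ (1 / p) * u ^ (-(1 / p))) := by gcongr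
      _ = B * u ^ (-(1 / p)) := by ring
  have hr : 1 / p < 1 := (div_lt_one (by linarith)).2 hp
  calc doubleStar μ f t = (ENNReal.ofReal t)⁻¹ * ∫⁻ u in Ioc 0 t, rearrangement μ f u := rfl
    _ ≤ (ENNReal.ofReal t)⁻¹ *
        ∫⁻ u in Ioc 0 t, ENNReal.ofReal B * ENNReal.ofReal (u ^ (-(1 / p))) := by
        gcongr (ENNReal.ofReal t)⁻¹ * ?_
        exact setLIntegral_mono' measurableSet_Ioc hpoint
    _ = (ENNReal.ofReal t)⁻¹ *
        (ENNReal.ofReal B * ENNReal.ofReal (t ^ (1 - 1 / p) / (1 - 1 / p))) := by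
        rw [lintegral_const_mul' _ _ ENNReal.ofReal_ne_top, setLIntegral_Ioc_rpow_neg hr ht.le]
    _ = ENNReal.ofReal (p / (p - 1) * c * invPhi Φ (1 / t)) := by
        have h1p : 0 < 1 - 1 / p := by linarith
        rw [← ENNReal.ofReal_mul hB, ← ENNReal.ofReal_inv_of_pos ht,
          ← ENNReal.ofReal_mul (inv_pos.2 ht).le, Real.rpow_sub ht, Real.rpow_one]
        congr 1
        have : 0 < t ^ (1 / p) := by positivity
        have : p - 1 ≠ 0 := by linarith
        field_simp
        ring

lemma weak_bound_of_doubleStar_bound (hm : MonotoneOn Φ (Ici 0)) {c : ℝ} (hc : 0 < c)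
    (h : ∀ t > 0, ENNReal.ofReal t * PhiE Φ (doubleStar μ f t / ENNReal.ofReal c) ≤ 1) :
    ∀ s > 0, distrib μ f s * ENNReal.ofReal (Φ (s / c)) ≤ 1 := by
  intro s hs
  refine ENNReal.mul_le_one_of_forall_lt fun r hr hrs => ?_
  rw [← ENNReal.ofReal_coe_nnreal] at hrs ⊢
  calc ENNReal.ofReal r * ENNReal.ofReal (Φ (s / c))
      ≤ ENNReal.ofReal r * PhiE Φ (doubleStar μ f r / ENNReal.ofReal c) := by
        rw [← PhiE_ofReal (by positivity), ENNReal.ofReal_div_of_pos hc]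
        gcongr ENNReal.ofReal r * ?_
        exact PhiE_mono hm (ENNReal.div_le_div_right (le_doubleStar_of_lt_distrib hr hrs) _)
    _ ≤ 1 := h r hr

lemma doubleStar_bound_of_weak_bound (hcont : ContinuousOn Φ (Ici 0))
    (hm : MonotoneOn Φ (Ici 0)) (h0 : Φ 0 = 0) (htop : Tendsto Φ atTop atTop) {p c : ℝ}
    (hp : 1 < p) (hmono : MonotoneOn (fun t : ℝ => t ^ (-p) * Φ t) (Ioi 0)) (hc : 0 < c)
    (hadm : ∀ s > 0, distrib μ f s * ENNReal.ofReal (Φ (s / c)) ≤ 1) :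
    ∀ t > 0,
      ENNReal.ofReal t * PhiE Φ (doubleStar μ f t / ENNReal.ofReal (p / (p - 1) * c)) ≤ 1 := by
  intro t ht
  have hK : 0 < p / (p - 1) * c := mul_pos (div_pos (by linarith) (by linarith)) hc
  have hI := invPhi_nonneg h0 htop (one_div_pos.2 ht).le
  have harg : doubleStar μ f t / ENNReal.ofReal (p / (p - 1) * c) ≤
      ENNReal.ofReal (invPhi Φ (1 / t)) := by
    rw [ENNReal.div_le_iff (by simpa using hK) ENNReal.ofReal_ne_top, ← ENNReal.ofReal_mul hI,
      mul_comm]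
    exact doubleStar_le_mul_invPhi hcont h0 htop hp hmono hc hadm ht
  calc ENNReal.ofReal t * PhiE Φ (doubleStar μ f t / ENNReal.ofReal (p / (p - 1) * c))
      ≤ ENNReal.ofReal t * ENNReal.ofReal (1 / t) := by
        gcongr ENNReal.ofReal t * ?_
        calc PhiE Φ _ ≤ PhiE Φ (ENNReal.ofReal (invPhi Φ (1 / t))) := PhiE_mono hm harg
          _ ≤ ENNReal.ofReal (1 / t) := by
              rw [PhiE_ofReal hI]
              exact ENNReal.ofReal_le_ofReal (apply_invPhi_le hcont h0 htop (one_div_pos.2 ht).le)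
    _ = 1 := by rw [← ENNReal.ofReal_mul ht.le, mul_one_div_cancel ht.ne', ENNReal.ofReal_one]

end Rearrangement

theorem weak_orlicz_renorming_general
    {X : Type*} [MeasurableSpace X] (μ : Measure X)
    (Φ : ℝ → ℝ) (hΦ : IsOrliczFunction Φ) (p : ℝ) (hp : 1 < p)
    (hmono : MonotoneOn (fun t : ℝ => t ^ (-p) * Φ t) (Ioi 0)) :
    ∃ C > 0, ∀ f : X → ℂ, Measurable f → wOrliczNorm μ Φ f < ⊤ →
      wOrliczNorm μ Φ f ≤
          sInf (ENNReal.ofReal '' {c : ℝ | 0 < c ∧ ∀ t > 0,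
            ENNReal.ofReal t * PhiE Φ (doubleStar μ f t / ENNReal.ofReal c) ≤ 1}) ∧
        sInf (ENNReal.ofReal '' {c : ℝ | 0 < c ∧ ∀ t > 0,
            ENNReal.ofReal t * PhiE Φ (doubleStar μ f t / ENNReal.ofReal c) ≤ 1}) ≤
          ENNReal.ofReal C * wOrliczNorm μ Φ f := by
  obtain ⟨hcont, -, hm, h0, -, htop⟩ := hΦ
  have hK : 0 < p / (p - 1) := div_pos (by linarith) (by linarith)
  refine ⟨p / (p - 1), hK, fun f _ _ => ⟨?_, ?_⟩⟩
  · exact sInf_le_sInf <| image_mono fun c hc =>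
      ⟨hc.1, weak_bound_of_doubleStar_bound hm hc.1 hc.2⟩
  · exact sInf_ofReal_image_le_mul hK fun c hc =>
      ⟨mul_pos hK hc.1, doubleStar_bound_of_weak_bound hcont hm h0 htop hp hmono hc.1 hc.2⟩

/-- Renorming of weak Orlicz spaces: if `1 < a_Φ ≤ b_Φ < ∞` (expressed via exponents
`1 < p ≤ q < ∞`), then the functional `f ↦ inf {c > 0 : t Φ(f**(t)/c) ≤ 1 for all t > 0}`
is equivalent to the weak Orlicz quasinorm, with a constant depending only on `Φ, p, q`. -/
theorem weak_orlicz_renorming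
    {X : Type*} [MeasurableSpace X] (μ : Measure X) [SigmaFinite μ]
    (Φ : ℝ → ℝ) (hΦ : IsOrliczFunction Φ) (p q : ℝ) (hp : 1 < p) (hpq : p ≤ q)
    (hmono : MonotoneOn (fun t : ℝ => t ^ (-p) * Φ t) (Ioi 0))
    (hanti : AntitoneOn (fun t : ℝ => t ^ (-q) * Φ t) (Ioi 0)) :
    ∃ C > 0, ∀ f : X → ℂ, Measurable f → wOrliczNorm μ Φ f < ⊤ →
      wOrliczNorm μ Φ f ≤
          sInf (ENNReal.ofReal '' {c : ℝ | 0 < c ∧ ∀ t > 0,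
            ENNReal.ofReal t * PhiE Φ (doubleStar μ f t / ENNReal.ofReal c) ≤ 1}) ∧
        sInf (ENNReal.ofReal '' {c : ℝ | 0 < c ∧ ∀ t > 0,
            ENNReal.ofReal t * PhiE Φ (doubleStar μ f t / ENNReal.ofReal c) ≤ 1}) ≤
          ENNReal.ofReal C * wOrliczNorm μ Φ f :=
  weak_orlicz_renorming_general μ Φ hΦ p hp hmono
end

section
/- Embedding of the weak Orlicz space into L¹ (commutative case, used in Section 5 of the paper): Let (X, μ) be a measure space with μ(X) ≤ 1, and let Φ be an Orlicz function for which there exists p > 1 such that t ↦ t^{−p}Φ(t) is nondecreasing on (0,∞) (this expresses a_Φ > 1). Then there exists a constant C > 0 depending only on Φ and p such that ∫_X |f| dμ ≤ C·‖f‖_{L^w_Φ} for every measurable f : X → ℂ with ‖f‖_{L^w_Φ} < ∞. In particular L^w_Φ(μ) ⊆ L¹(μ). -/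
open Set Filter MeasureTheory
open scoped ENNReal

/-!
By the layer-cake formula `∫ |f| dμ = ∫₀^∞ λ_f(t) dt`. If `c` is admissible in the definition of
`‖f‖_{L^w_Φ}`, then `λ_f ≤ μ(X) ≤ 1` on `(0, c]`, while for `t > c` the growth condition gives
`Φ(t/c) ≥ Φ(1) (t/c)^p`, hence `λ_f(t) ≤ 1 / Φ(t/c) ≤ c^p t^{-p} / Φ(1)`, which is integrable at
infinity because `p > 1`. Altogether `∫ |f| dμ ≤ (1 + 1/(Φ(1)(p-1))) c`; take the infimum over `c`.
-/

lemma mul_rpow_le_of_monotoneOn_rpow_neg_mul {Φ : ℝ → ℝ} {p : ℝ}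
    (hmono : MonotoneOn (fun t : ℝ => t ^ (-p) * Φ t) (Ioi 0)) {u : ℝ} (hu : 1 ≤ u) :
    Φ 1 * u ^ p ≤ Φ u := by
  have hu0 : 0 < u := one_pos.trans_le hu
  have h := hmono (mem_Ioi.2 one_pos) (mem_Ioi.2 hu0) hu
  simp only [Real.one_rpow, one_mul, Real.rpow_neg hu0.le] at h
  rw [mul_comm]
  exact (le_inv_mul_iff₀ (Real.rpow_pos_of_pos hu0 p)).1 h

lemma lintegral_Ioi_rpow_neg {p c : ℝ} (hp : 1 < p) (hc : 0 < c) :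
    ∫⁻ t in Ioi c, ENNReal.ofReal (t ^ (-p)) = ENNReal.ofReal (c ^ (1 - p) / (p - 1)) := by
  have hp' : -p < -1 := neg_lt_neg hp
  rw [← ofReal_integral_eq_lintegral_ofReal (integrableOn_Ioi_rpow_of_lt hp' hc)
    (ae_restrict_of_forall_mem measurableSet_Ioi fun t ht => Real.rpow_nonneg
      (hc.trans ht).le _), integral_Ioi_rpow_of_lt hp' hc]
  congr 1
  rw [show -p + 1 = -(p - 1) by ring, div_neg, neg_div, neg_neg, neg_sub, sub_eq_add_neg,
    add_comm]

lemma lintegral_norm_le_of_distrib_le_mul_rpow_neg {X : Type*} [MeasurableSpace X]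
    {μ : Measure X} (hμ : μ univ ≤ 1) {f : X → ℂ} (hf : AEMeasurable f μ) {a : ℝ≥0∞}
    {c p : ℝ} (hp : 1 < p) (hc : 0 < c)
    (htail : ∀ t > c, distrib μ f t ≤ a * ENNReal.ofReal (t ^ (-p))) :
    ∫⁻ x, ENNReal.ofReal ‖f x‖ ∂μ ≤
      ENNReal.ofReal c + a * ENNReal.ofReal (c ^ (1 - p) / (p - 1)) := by
  rw [lintegral_eq_lintegral_meas_lt μ (ae_of_all _ fun x => norm_nonneg _) hf.norm,
    ← Ioc_union_Ioi_eq_Ioi hc.le, lintegral_union measurableSet_Ioi Ioc_disjoint_Ioi_same]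
  gcongr
  · calc ∫⁻ t in Ioc 0 c, μ {x | t < ‖f x‖}
        ≤ ∫⁻ _ in Ioc 0 c, 1 := lintegral_mono fun t => (measure_mono (subset_univ _)).trans hμ
      _ = ENNReal.ofReal c := by simp
  · calc ∫⁻ t in Ioi c, μ {x | t < ‖f x‖}
        ≤ ∫⁻ t in Ioi c, a * ENNReal.ofReal (t ^ (-p)) :=
          setLIntegral_mono' measurableSet_Ioi fun t ht => htail t ht
      _ = a * ENNReal.ofReal (c ^ (1 - p) / (p - 1)) := by
          rw [lintegral_const_mul _ (by fun_prop), lintegral_Ioi_rpow_neg hp hc]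


lemma distrib_le_of_admissible {X : Type*} [MeasurableSpace X] {μ : Measure X} {f : X → ℂ}
    {Φ : ℝ → ℝ} {p c : ℝ} (hΦ1 : 0 < Φ 1)
    (hmono : MonotoneOn (fun t : ℝ => t ^ (-p) * Φ t) (Ioi 0)) (hc : 0 < c)
    (hadm : ∀ s > 0, distrib μ f s * ENNReal.ofReal (Φ (s / c)) ≤ 1) {t : ℝ} (ht : c < t) :
    distrib μ f t ≤ ENNReal.ofReal (c ^ p / Φ 1) * ENNReal.ofReal (t ^ (-p)) := by
  have ht0 : 0 < t := hc.trans ht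
  have hgrowth : Φ 1 * (t / c) ^ p ≤ Φ (t / c) :=
    mul_rpow_le_of_monotoneOn_rpow_neg_mul hmono ((one_le_div hc).2 ht.le)
  have hpos : 0 < Φ 1 * (t / c) ^ p := mul_pos hΦ1 (Real.rpow_pos_of_pos (div_pos ht0 hc) p)
  calc distrib μ f t
      ≤ (ENNReal.ofReal (Φ (t / c)))⁻¹ := ENNReal.le_inv_iff_mul_le.2 (hadm t ht0)
    _ ≤ (ENNReal.ofReal (Φ 1 * (t / c) ^ p))⁻¹ := by gcongr
    _ = ENNReal.ofReal (c ^ p / Φ 1) * ENNReal.ofReal (t ^ (-p)) := by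
        rw [← ENNReal.ofReal_inv_of_pos hpos, ← ENNReal.ofReal_mul (by positivity),
          Real.div_rpow ht0.le hc.le, Real.rpow_neg ht0.le]
        have : 0 < t ^ p := Real.rpow_pos_of_pos ht0 p
        have : 0 < c ^ p := Real.rpow_pos_of_pos hc p
        field_simp

lemma lintegral_norm_le_of_admissible {X : Type*} [MeasurableSpace X] {μ : Measure X}
    (hμ : μ univ ≤ 1) {f : X → ℂ} (hf : AEMeasurable f μ) {Φ : ℝ → ℝ} {p c : ℝ}
    (hΦ1 : 0 < Φ 1) (hp : 1 < p) (hmono : MonotoneOn (fun t : ℝ => t ^ (-p) * Φ t) (Ioi 0))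
    (hc : 0 < c) (hadm : ∀ s > 0, distrib μ f s * ENNReal.ofReal (Φ (s / c)) ≤ 1) :
    ∫⁻ x, ENNReal.ofReal ‖f x‖ ∂μ ≤
      ENNReal.ofReal (1 + 1 / (Φ 1 * (p - 1))) * ENNReal.ofReal c := by
  refine (lintegral_norm_le_of_distrib_le_mul_rpow_neg hμ hf hp hc
    fun t ht => distrib_le_of_admissible hΦ1 hmono hc hadm ht).trans_eq ?_
  have hp1 : 0 < p - 1 := sub_pos.2 hp
  rw [← ENNReal.ofReal_mul (by positivity), ← ENNReal.ofReal_add hc.le (by positivity),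
    ← ENNReal.ofReal_mul (by positivity)]
  congr 1
  have hcp : c ^ p * c ^ (1 - p) = c := by
    rw [← Real.rpow_add hc, add_sub_cancel, Real.rpow_one]
  rw [div_mul_div_comm, hcp]
  field_simp

lemma le_mul_wOrliczNorm {X : Type*} [MeasurableSpace X] {μ : Measure X} {Φ : ℝ → ℝ}
    {f : X → ℂ} {a K : ℝ≥0∞} (hK0 : K ≠ 0) (hK : K ≠ ∞)
    (h : ∀ c > 0, (∀ s > 0, distrib μ f s * ENNReal.ofReal (Φ (s / c)) ≤ 1) →
      a ≤ K * ENNReal.ofReal c) :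
    a ≤ K * wOrliczNorm μ Φ f := by
  rw [mul_comm, ← ENNReal.div_le_iff_le_mul (.inl hK0) (.inl hK)]
  refine le_sInf ?_
  rintro _ ⟨c, ⟨hc, hadm⟩, rfl⟩
  rw [ENNReal.div_le_iff_le_mul (.inl hK0) (.inl hK), mul_comm]
  exact h c hc hadm

/-- Embedding of the weak Orlicz space into `L¹`: on a measure space of total mass at most `1`,
if `a_Φ > 1` (expressed by `t ↦ t^{-p} Φ(t)` nondecreasing for some `p > 1`), then there is a
constant `C > 0`, depending only on `Φ` and `p`, with `∫ |f| dμ ≤ C ‖f‖_{L^w_Φ}` for every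
measurable `f` of finite weak Orlicz quasinorm. -/
theorem weak_orlicz_subset_L1
    {X : Type*} [MeasurableSpace X] (μ : Measure X) (hμ : μ univ ≤ 1)
    (Φ : ℝ → ℝ) (hΦ : IsOrliczFunction Φ) (p : ℝ) (hp : 1 < p)
    (hmono : MonotoneOn (fun t : ℝ => t ^ (-p) * Φ t) (Ioi 0)) :
    ∃ C > 0, ∀ f : X → ℂ, Measurable f → wOrliczNorm μ Φ f < ⊤ →
      ∫⁻ x, ENNReal.ofReal ‖f x‖ ∂μ ≤ ENNReal.ofReal C * wOrliczNorm μ Φ f := by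
  have hΦ1 : 0 < Φ 1 := hΦ.2.2.2.2.1 1 one_pos
  have hC : 0 < 1 + 1 / (Φ 1 * (p - 1)) := by
    have := sub_pos.2 hp
    positivity
  refine ⟨_, hC, fun f hf _ => ?_⟩
  exact le_mul_wOrliczNorm (ENNReal.ofReal_pos.2 hC).ne' ENNReal.ofReal_ne_top
    fun c hc hadm => lintegral_norm_le_of_admissible hμ hf.aemeasurable hΦ1 hp hmono hc hadm
end

section
/- (Example 3.6 of the paper.) Let a > 1 and b > 0 and define Φ(t) = t^a·log(1 + t^b) for t ≥ 0. Then: (i) Φ is an Orlicz function, i.e., Φ is continuous, convex on [0,∞), nondecreasing, Φ(0) = 0, Φ(t) > 0 for t > 0, and Φ(t) → ∞ as t → ∞; and (ii) writing Φ'(t) for the derivative of Φ at t > 0, the lower Orlicz index is a_Φ = inf_{t>0} t·Φ'(t)/Φ(t) = a and the upper Orlicz index is b_Φ = sup_{t>0} t·Φ'(t)/Φ(t) = a + b. -/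
/-!
For `t > 0` one computes `t Φ'(t) / Φ(t) = a + b E(t^b)`, where `E(u) = u / ((1 + u) log (1 + u))`
is the elasticity of `log (1 + u)`. The bounds `u / (1 + u) ≤ log (1 + u) ≤ u` give
`1 / (1 + u) ≤ E(u) ≤ 1`, so `E` is squeezed to `1` as `u → 0⁺`, and
`E(u) ≤ 1 / log (1 + u)` tends to `0` as `u → ∞`: the elasticity stays in `[a, a + b]` and
approaches both ends.
Convexity holds because `Φ'(t) = t^(a-1) (a log (1 + t^b) + b t^b / (1 + t^b))` is a product of
nonnegative nondecreasing factors.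
-/

open Set Filter

/-- The Orlicz function of Example 3.6: `Φ(t) = t^a · log(1 + t^b)`. -/
noncomputable def PhiExample (a b : ℝ) (t : ℝ) : ℝ :=
  t ^ a * Real.log (1 + t ^ b)

open Real Topology

section

variable {α β : Type*} [ConditionallyCompleteLinearOrder β] [TopologicalSpace β]
  [OrderTopology β] {f : α → β} {s : Set α} {l : Filter α} [l.NeBot] {c : β}

theorem csInf_image_eq_of_tendsto (hc : ∀ x ∈ s, c ≤ f x) (hs : ∀ᶠ x in l, x ∈ s)
    (hf : Tendsto f l (𝓝 c)) : sInf (f '' s) = c := by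
  obtain ⟨x, hx⟩ := hs.exists
  refine (isGLB_of_mem_closure ?_ ?_).csInf_eq ⟨f x, mem_image_of_mem f hx⟩
  · rintro _ ⟨y, hy, rfl⟩
    exact hc y hy
  · exact mem_closure_of_tendsto hf (hs.mono fun y hy => mem_image_of_mem f hy)

theorem csSup_image_eq_of_tendsto (hc : ∀ x ∈ s, f x ≤ c) (hs : ∀ᶠ x in l, x ∈ s)
    (hf : Tendsto f l (𝓝 c)) : sSup (f '' s) = c :=
  csInf_image_eq_of_tendsto (β := βᵒᵈ) hc hs hf

end

noncomputable def log1pElasticity (u : ℝ) : ℝ :=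
  u / ((1 + u) * log (1 + u))

section log1pElasticity

variable {u : ℝ}

theorem log1pElasticity_pos (hu : 0 < u) : 0 < log1pElasticity u := by
  have : 0 < log (1 + u) := log_pos (by linarith)
  unfold log1pElasticity
  positivity

theorem log1pElasticity_le_one (hu : 0 < u) : log1pElasticity u ≤ 1 := by
  have hlog : 1 - (1 + u)⁻¹ ≤ log (1 + u) := one_sub_inv_le_log_of_pos (by linarith)
  have : 0 < log (1 + u) := log_pos (by linarith)
  rw [log1pElasticity, div_le_one (by positivity)]
  calc u = (1 + u) * (1 - (1 + u)⁻¹) := by field_simp; ring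
    _ ≤ (1 + u) * log (1 + u) := by gcongr

theorem inv_one_add_le_log1pElasticity (hu : 0 < u) : (1 + u)⁻¹ ≤ log1pElasticity u := by
  have hlog : log (1 + u) ≤ u := by linarith [log_le_sub_one_of_pos (by linarith : 0 < 1 + u)]
  have : 0 < log (1 + u) := log_pos (by linarith)
  rw [log1pElasticity, mul_comm, ← div_div, inv_eq_one_div]
  gcongr
  rwa [le_div_iff₀ this, one_mul]

theorem tendsto_log1pElasticity_atTop : Tendsto log1pElasticity atTop (𝓝 0) := by
  have hlog : Tendsto (fun u : ℝ => (log (1 + u))⁻¹) atTop (𝓝 0) :=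
    (tendsto_log_atTop.comp (tendsto_atTop_add_const_left _ 1 tendsto_id)).inv_tendsto_atTop
  refine tendsto_of_tendsto_of_tendsto_of_le_of_le' tendsto_const_nhds hlog ?_ ?_
  · filter_upwards [eventually_gt_atTop 0] with u hu using (log1pElasticity_pos hu).le
  · filter_upwards [eventually_gt_atTop 0] with u hu
    have : 0 < log (1 + u) := log_pos (by linarith)
    rw [log1pElasticity, ← div_div, div_eq_mul_inv]
    exact mul_le_of_le_one_left (by positivity) ((div_le_one (by linarith)).2 (by linarith))

theorem tendsto_log1pElasticity_nhdsGT_zero : Tendsto log1pElasticity (𝓝[>] 0) (𝓝 1) := by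
  have hinv : Tendsto (fun u : ℝ => (1 + u)⁻¹) (𝓝[>] 0) (𝓝 1) := by
    have : ContinuousAt (fun u : ℝ => (1 + u)⁻¹) 0 := by fun_prop (disch := norm_num)
    simpa using this.tendsto.mono_left nhdsWithin_le_nhds
  refine tendsto_of_tendsto_of_tendsto_of_le_of_le' hinv tendsto_const_nhds ?_ ?_
  · filter_upwards [self_mem_nhdsWithin] with u hu using inv_one_add_le_log1pElasticity hu
  · filter_upwards [self_mem_nhdsWithin] with u hu using log1pElasticity_le_one hu

end log1pElasticity

theorem tendsto_rpow_nhdsGT_zero_nhdsGT_zero {b : ℝ} (hb : 0 < b) :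
    Tendsto (fun t : ℝ => t ^ b) (𝓝[>] 0) (𝓝[>] 0) := by
  refine tendsto_nhdsWithin_iff.2 ⟨?_, ?_⟩
  · exact ((continuous_rpow_const hb.le).tendsto' 0 0 (zero_rpow hb.ne')).mono_left
      nhdsWithin_le_nhds
  · filter_upwards [self_mem_nhdsWithin] with t ht using rpow_pos_of_pos ht b

namespace PhiExample

variable {a b t : ℝ}

theorem pos (ht : 0 < t) : 0 < PhiExample a b t :=
  mul_pos (rpow_pos_of_pos ht a) (log_pos (by linarith [rpow_pos_of_pos ht b]))

theorem apply_zero (hb : b ≠ 0) : PhiExample a b 0 = 0 := by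
  simp [PhiExample, zero_rpow hb]

theorem continuousOn (ha : 0 ≤ a) (hb : 0 ≤ b) : ContinuousOn (PhiExample a b) (Ici 0) := by
  refine (continuous_rpow_const ha).continuousOn.mul (ContinuousOn.log ?_ fun t ht => ?_)
  · exact (continuous_const.add (continuous_rpow_const hb)).continuousOn
  · linarith [rpow_nonneg (mem_Ici.1 ht) b]

theorem monotoneOn (ha : 0 ≤ a) (hb : 0 ≤ b) : MonotoneOn (PhiExample a b) (Ici 0) := by
  intro x (hx : 0 ≤ x) y (hy : 0 ≤ y) hxy
  have hxb : 0 ≤ x ^ b := rpow_nonneg hx b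
  have : 0 ≤ log (1 + x ^ b) := log_nonneg (by linarith)
  unfold PhiExample
  gcongr

theorem tendsto_atTop (ha : 0 < a) (hb : 0 < b) : Tendsto (PhiExample a b) atTop atTop :=
  (tendsto_rpow_atTop ha).atTop_mul_atTop₀
    (tendsto_log_atTop.comp (tendsto_atTop_add_const_left _ 1 (tendsto_rpow_atTop hb)))

theorem hasDerivAt (ht : 0 < t) :
    HasDerivAt (PhiExample a b)
      (t ^ (a - 1) * (a * log (1 + t ^ b) + b * (t ^ b / (1 + t ^ b)))) t := by
  have hpow : ∀ p : ℝ, HasDerivAt (fun x : ℝ => x ^ p) (p * t ^ (p - 1)) t :=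
    fun p => hasDerivAt_rpow_const (Or.inl ht.ne')
  have hlog := ((hpow b).const_add 1).log (by linarith [rpow_pos_of_pos ht b])
  refine ((hpow a).mul hlog).congr_deriv ?_
  have : 0 < 1 + t ^ b := by linarith [rpow_pos_of_pos ht b]
  rw [rpow_sub_one ht.ne', rpow_sub_one ht.ne']
  field_simp

theorem elasticity (ht : 0 < t) :
    t * deriv (PhiExample a b) t / PhiExample a b t = a + b * log1pElasticity (t ^ b) := by
  have hb : 0 < t ^ b := rpow_pos_of_pos ht b
  have hlog : 0 < log (1 + t ^ b) := log_pos (by linarith)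
  rw [(hasDerivAt ht).deriv, PhiExample, log1pElasticity, rpow_sub_one ht.ne']
  field_simp

theorem monotoneOn_deriv (ha : 1 ≤ a) (hb : 0 ≤ b) :
    MonotoneOn (deriv (PhiExample a b)) (Ioi 0) := by
  intro x (hx : 0 < x) y (hy : 0 < y) hxy
  rw [(hasDerivAt hx).deriv, (hasDerivAt hy).deriv]
  have hxb : 0 ≤ x ^ b := rpow_nonneg hx.le b
  have hxyb : x ^ b ≤ y ^ b := rpow_le_rpow hx.le hxy hb
  have : 0 ≤ log (1 + x ^ b) := log_nonneg (by linarith)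
  have hfrac : x ^ b / (1 + x ^ b) ≤ y ^ b / (1 + y ^ b) := by
    rw [div_le_div_iff₀ (by linarith) (by linarith)]
    nlinarith
  gcongr

theorem convexOn (ha : 1 ≤ a) (hb : 0 ≤ b) : ConvexOn ℝ (Ici 0) (PhiExample a b) := by
  refine MonotoneOn.convexOn_of_deriv (convex_Ici 0) (continuousOn (by linarith) hb) ?_ ?_
  · rw [interior_Ici]
    exact fun t ht => (hasDerivAt ht).differentiableAt.differentiableWithinAt
  · rw [interior_Ici]
    exact monotoneOn_deriv ha hb

theorem setOf_elasticity_eq_image :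
    {r : ℝ | ∃ t > 0, r = t * deriv (PhiExample a b) t / PhiExample a b t} =
      (fun t => a + b * log1pElasticity (t ^ b)) '' Ioi 0 := by
  ext r
  simp only [mem_ofPred_eq, mem_image, mem_Ioi]
  exact exists_congr fun t => and_congr_right fun ht => by rw [elasticity ht, eq_comm]

end PhiExample

/-- Example 3.6: for `a > 1` and `b > 0`, `Φ(t) = t^a log(1 + t^b)` is an Orlicz function,
with lower Orlicz index `a_Φ = inf_{t>0} t Φ'(t)/Φ(t) = a` and upper Orlicz index
`b_Φ = sup_{t>0} t Φ'(t)/Φ(t) = a + b`. -/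
theorem phiExample_is_orlicz_and_indices (a b : ℝ) (ha : 1 < a) (hb : 0 < b) :
    (ContinuousOn (PhiExample a b) (Ici 0) ∧
      ConvexOn ℝ (Ici 0) (PhiExample a b) ∧
      MonotoneOn (PhiExample a b) (Ici 0) ∧
      PhiExample a b 0 = 0 ∧
      (∀ t > 0, 0 < PhiExample a b t) ∧
      Tendsto (PhiExample a b) atTop atTop) ∧
    sInf {r : ℝ | ∃ t > 0, r = t * deriv (PhiExample a b) t / PhiExample a b t} = a ∧
    sSup {r : ℝ | ∃ t > 0, r = t * deriv (PhiExample a b) t / PhiExample a b t} = a + b := by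
  set e : ℝ → ℝ := fun t => a + b * log1pElasticity (t ^ b)
  have he_lower : ∀ t ∈ Ioi (0 : ℝ), a ≤ e t := fun t ht =>
    le_add_of_nonneg_right (mul_pos hb (log1pElasticity_pos (rpow_pos_of_pos ht b))).le
  have he_upper : ∀ t ∈ Ioi (0 : ℝ), e t ≤ a + b := fun t ht =>
    add_le_add_right
      (mul_le_of_le_one_right hb.le (log1pElasticity_le_one (rpow_pos_of_pos ht b))) a
  have he_atTop : Tendsto e atTop (𝓝 a) := by
    simpa using ((tendsto_log1pElasticity_atTop.comp
      (tendsto_rpow_atTop hb)).const_mul b).const_add a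
  have he_zero : Tendsto e (𝓝[>] 0) (𝓝 (a + b)) := by
    simpa using ((tendsto_log1pElasticity_nhdsGT_zero.comp
      (tendsto_rpow_nhdsGT_zero_nhdsGT_zero hb)).const_mul b).const_add a
  refine ⟨⟨PhiExample.continuousOn (by linarith) hb.le, PhiExample.convexOn ha.le hb.le,
    PhiExample.monotoneOn (by linarith) hb.le, PhiExample.apply_zero hb.ne',
    fun t => PhiExample.pos, PhiExample.tendsto_atTop (by linarith) hb⟩, ?_, ?_⟩
  · rw [PhiExample.setOf_elasticity_eq_image]
    exact csInf_image_eq_of_tendsto he_lower (eventually_gt_atTop 0) he_atTop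
  · rw [PhiExample.setOf_elasticity_eq_image]
    exact csSup_image_eq_of_tendsto (l := 𝓝[>] 0) he_upper self_mem_nhdsWithin he_zero
end
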